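/- arXiv:2411.09550 — 5 statements merged into one kernel-verified Lean document; each statement's English description precedes it below -/
import Mathlib

section
/- Let n ≥ 2, let A : ℝ → ℝ^{n×n} be continuous, and let X : ℝ → ℝ^{n×n} be differentiable with X(t) skew-symmetric for every t. Then X satisfies the matrix differential equation Ẋ(t) = A(t)X(t) + X(t)A(t)ᵀ for all t if and only if the vector vec⃗(X(t)) satisfies d/dt vec⃗(X(t)) = A(t)^{[2]} vec⃗(X(t)) for all t. -/
open Matrix
open scoped Kronecker

/-- Row (row-major) vectorisation of an `m × n` real matrix. -/
def vecr {m n : ℕ} (X : Matrix (Fin m) (Fin n) ℝ) : Fin m × Fin n → ℝ :=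
  fun p => X p.1 p.2

/-- Strict upper row half-vectorisation of an `n × n` real matrix, indexed by pairs
`(i, j)` with `i < j` in lexicographic order. -/
def svec (n : ℕ) (X : Matrix (Fin n) (Fin n) ℝ) :
    {p : Fin n × Fin n // p.1 < p.2} → ℝ :=
  fun p => X p.1.1 p.1.2

/-- The matrix `Mₙ = Σ_{i ≠ j} sign(j - i) e_{(i-1)n+j} e_{k(i,j)}ᵀ`. -/
def Mmat (n : ℕ) : Matrix (Fin n × Fin n) {p : Fin n × Fin n // p.1 < p.2} ℝ :=
  fun q p => if q = p.1 then 1 else if q = (p.1.2, p.1.1) then -1 else 0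

/-- The matrix `Lₙ = Σ_{i < j} e_{k(i,j)} e_{(i-1)n+j}ᵀ`. -/
def Lmat (n : ℕ) : Matrix {p : Fin n × Fin n // p.1 < p.2} (Fin n × Fin n) ℝ :=
  fun p q => if q = p.1 then 1 else 0

/-- The second additive compound `A^{[2]} = Lₙ (A ⊗ Iₙ + Iₙ ⊗ A) Mₙ`. -/
noncomputable def addComp (n : ℕ) (A : Matrix (Fin n) (Fin n) ℝ) :
    Matrix {p : Fin n × Fin n // p.1 < p.2} {p : Fin n × Fin n // p.1 < p.2} ℝ :=
  Lmat n * (A ⊗ₖ (1 : Matrix (Fin n) (Fin n) ℝ) + (1 : Matrix (Fin n) (Fin n) ℝ) ⊗ₖ A) * Mmat n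

/-!
For skew-symmetric `X`, `Mₙ vec⃗(X) = vec(X)`; the Kronecker sum `A ⊗ I + I ⊗ A` acts on
`vec(X)` as `X ↦ AX + XAᵀ`; and `Lₙ` reads off the strict upper triangle. Hence
`A^{[2]} vec⃗(X) = vec⃗(AX + XAᵀ)`. Since `AX + XAᵀ` is skew-symmetric together with `X`, both
sides of the matrix equation are determined by their strict upper triangles.
-/

section SkewSymmetric

variable {ι G : Type*} [AddGroup G] {X : Matrix ι ι G}

theorem apply_swap_of_transpose_eq_neg (hX : Xᵀ = -X) (i j : ι) : X j i = -X i j :=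
  congr_fun₂ hX i j

theorem apply_self_of_transpose_eq_neg [IsAddTorsionFree G] (hX : Xᵀ = -X) (i : ι) :
    X i i = 0 :=
  self_eq_neg.mp (apply_swap_of_transpose_eq_neg hX i i)

end SkewSymmetric

theorem transpose_mul_add_mul_transpose_eq_neg {ι R : Type*} [Fintype ι] [CommRing R]
    (A : Matrix ι ι R) {X : Matrix ι ι R} (hX : Xᵀ = -X) :
    (A * X + X * Aᵀ)ᵀ = -(A * X + X * Aᵀ) := by
  rw [transpose_add, transpose_mul, transpose_mul, transpose_transpose, hX, Matrix.neg_mul,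
    Matrix.mul_neg, neg_add, add_comm]

theorem hasDerivAt_apply_of_hasDerivAt_apply_of_lt {ι : Type*} [LinearOrder ι]
    {X : ℝ → Matrix ι ι ℝ} {D : Matrix ι ι ℝ} {t : ℝ}
    (hX : ∀ s, (X s)ᵀ = -X s) (hD : Dᵀ = -D)
    (h : ∀ i j, i < j → HasDerivAt (fun s => X s i j) (D i j) t) (i j : ι) :
    HasDerivAt (fun s => X s i j) (D i j) t := by
  rcases lt_trichotomy i j with hij | rfl | hji
  · exact h i j hij
  · simp only [apply_self_of_transpose_eq_neg (hX _), apply_self_of_transpose_eq_neg hD]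
    exact hasDerivAt_const t (0 : ℝ)
  · simpa only [← apply_swap_of_transpose_eq_neg (hX _), ← apply_swap_of_transpose_eq_neg hD]
      using (h j i hji).fun_neg

-- Mathlib's `Matrix.vec` is column-major.
theorem vecr_eq_vec_transpose {m n : ℕ} (X : Matrix (Fin m) (Fin n) ℝ) : vecr X = vec Xᵀ := rfl

theorem kronecker_mulVec_vecr {m n : ℕ} (A : Matrix (Fin m) (Fin m) ℝ)
    (B : Matrix (Fin n) (Fin n) ℝ) (X : Matrix (Fin m) (Fin n) ℝ) :
    (A ⊗ₖ B) *ᵥ vecr X = vecr (A * X * Bᵀ) := by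
  rw [vecr_eq_vec_transpose, kronecker_mulVec_vec, vecr_eq_vec_transpose, transpose_mul,
    transpose_mul, transpose_transpose, Matrix.mul_assoc]

theorem kroneckerSum_mulVec_vecr {n : ℕ} (A X : Matrix (Fin n) (Fin n) ℝ) :
    (A ⊗ₖ (1 : Matrix (Fin n) (Fin n) ℝ) + (1 : Matrix (Fin n) (Fin n) ℝ) ⊗ₖ A) *ᵥ vecr X
      = vecr (A * X + X * Aᵀ) := by
  rw [add_mulVec, kronecker_mulVec_vecr, kronecker_mulVec_vecr, transpose_one, Matrix.mul_one,
    Matrix.one_mul]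
  rfl

theorem Lmat_mulVec_vecr {n : ℕ} (X : Matrix (Fin n) (Fin n) ℝ) :
    Lmat n *ᵥ vecr X = svec n X := by
  ext p
  simp [mulVec, dotProduct, Lmat, vecr, svec]

theorem Mmat_mulVec_svec {n : ℕ} {X : Matrix (Fin n) (Fin n) ℝ} (hX : Xᵀ = -X) :
    Mmat n *ᵥ svec n X = vecr X := by
  ext ⟨k, l⟩
  simp only [mulVec, dotProduct, Mmat, svec, vecr]
  rcases lt_trichotomy k l with hkl | rfl | hlk
  · rw [Finset.sum_eq_single ⟨(k, l), hkl⟩]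
    · simp
    · rintro ⟨⟨i, j⟩, hij⟩ _ hne
      simp only [ne_eq, Subtype.mk.injEq, Prod.mk.injEq] at hne
      grind
    · simp
  · rw [apply_self_of_transpose_eq_neg hX]
    refine Finset.sum_eq_zero fun ⟨⟨i, j⟩, hij⟩ _ => ?_
    simp only [Prod.mk.injEq]
    grind
  · rw [Finset.sum_eq_single ⟨(l, k), hlk⟩]
    · simp [hlk.ne', apply_swap_of_transpose_eq_neg hX l k]
    · rintro ⟨⟨i, j⟩, hij⟩ _ hne
      simp only [ne_eq, Subtype.mk.injEq, Prod.mk.injEq] at hne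
      grind
    · simp

theorem addComp_mulVec_svec {n : ℕ} (A : Matrix (Fin n) (Fin n) ℝ)
    {X : Matrix (Fin n) (Fin n) ℝ} (hX : Xᵀ = -X) :
    addComp n A *ᵥ svec n X = svec n (A * X + X * Aᵀ) := by
  rw [addComp, ← mulVec_mulVec, ← mulVec_mulVec, Mmat_mulVec_svec hX, kroneckerSum_mulVec_vecr,
    Lmat_mulVec_vecr]

theorem stmt3_general {n : ℕ}
    (A : ℝ → Matrix (Fin n) (Fin n) ℝ)
    (X : ℝ → Matrix (Fin n) (Fin n) ℝ)
    (hXskew : ∀ t, (X t)ᵀ = -(X t)) :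
    (∀ (t : ℝ) (i j : Fin n),
        HasDerivAt (fun s => X s i j) ((A t * X t + X t * (A t)ᵀ) i j) t)
    ↔ (∀ (t : ℝ) (p : {p : Fin n × Fin n // p.1 < p.2}),
        HasDerivAt (fun s => svec n (X s) p)
          ((addComp n (A t)).mulVec (svec n (X t)) p) t) := by
  have hcomp (t : ℝ) : addComp n (A t) *ᵥ svec n (X t) = svec n (A t * X t + X t * (A t)ᵀ) :=
    addComp_mulVec_svec (A t) (hXskew t)
  simp only [hcomp]
  constructor
  · exact fun h t p => h t p.1.1 p.1.2
  · exact fun h t => hasDerivAt_apply_of_hasDerivAt_apply_of_lt hXskew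
      (transpose_mul_add_mul_transpose_eq_neg (A t) (hXskew t)) fun i j hij => h t ⟨(i, j), hij⟩

/-- for `n ≥ 2`, continuous `A : ℝ → ℝ^{n×n}` and differentiable
skew-symmetric-valued `X : ℝ → ℝ^{n×n}`, one has `Ẋ(t) = A(t)X(t) + X(t)A(t)ᵀ` for all `t`
if and only if `d/dt vec⃗(X(t)) = A(t)^{[2]} vec⃗(X(t))` for all `t`. -/
theorem stmt3 {n : ℕ} (hn : 2 ≤ n)
    (A : ℝ → Matrix (Fin n) (Fin n) ℝ) (hA : Continuous A)
    (X : ℝ → Matrix (Fin n) (Fin n) ℝ)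
    (hXdiff : ∀ i j : Fin n, Differentiable ℝ fun t => X t i j)
    (hXskew : ∀ t, (X t)ᵀ = -(X t)) :
    (∀ (t : ℝ) (i j : Fin n),
        HasDerivAt (fun s => X s i j) ((A t * X t + X t * (A t)ᵀ) i j) t)
    ↔ (∀ (t : ℝ) (p : {p : Fin n × Fin n // p.1 < p.2}),
        HasDerivAt (fun s => svec n (X s) p)
          ((addComp n (A t)).mulVec (svec n (X t)) p) t) :=
  stmt3_general A X hXskew
end

section
/- Let N ≥ 2 and positive integers n_1, …, n_N with n = n_1 + … + n_N; partition matrices in ℝ^{n×n} into blocks according to these dimensions. Let A : ℝ → ℝ^{n×n} be continuous and let X : ℝ → ℝ^{n×n} be differentiable with X(t) skew-symmetric for all t, satisfying Ẋ(t) = A(t)X(t) + X(t)A(t)ᵀ. Then for every index i with n_i ≥ 2 and all t, d/dt vec⃗(X_{ii}(t)) = A_{ii}(t)^{[2]} vec⃗(X_{ii}(t)) + Σ_{k<i} B_{ik}(t) vec(X_{ki}(t)) + Σ_{k>i} B_{ik}(t) vec(X_{ik}(t)), where B_{ik} = L_{n_i}[(A_{ik} ⊗ I_{n_i}) − (I_{n_i}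 ⊗ A_{ik}) Q_{n_i,n_k}] if k < i and B_{ik} = L_{n_i}[(I_{n_i} ⊗ A_{ik}) − (A_{ik} ⊗ I_{n_i}) Q_{n_i,n_k}] if k > i. -/
open Matrix
open scoped Kronecker

/-- The commutation matrix `Q_{p,q}`, satisfying `vec(Xᵀ) = Q_{p,q} vec(X)` for any
`p × q` matrix `X`. -/
def Qmat (p q : ℕ) : Matrix (Fin q × Fin p) (Fin p × Fin q) ℝ :=
  fun r c => if r = (c.2, c.1) then 1 else 0

/-- Block `A_{ij}` of a matrix partitioned according to the sigma-type index
`Σ i : Fin N, Fin (nd i)`. -/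
def blk {N : ℕ} {nd : Fin N → ℕ}
    (A : Matrix (Σ i : Fin N, Fin (nd i)) (Σ i : Fin N, Fin (nd i)) ℝ)
    (i j : Fin N) : Matrix (Fin (nd i)) (Fin (nd j)) ℝ :=
  fun a b => A ⟨i, a⟩ ⟨j, b⟩

/-- The matrix `B_{ik} = L_{n_i}[(A_{ik} ⊗ I_{n_i}) − (I_{n_i} ⊗ A_{ik}) Q]` for `k < i`,
and `B_{ik} = L_{n_i}[(I_{n_i} ⊗ A_{ik}) − (A_{ik} ⊗ I_{n_i}) Q_{n_i,n_k}]` for `k > i`,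
where `Q` is the commutation matrix converting `vec(X_{ki})` into `vec(X_{ki}ᵀ)`
(resp. `vec(X_{ik})` into `vec(X_{ik}ᵀ)`). -/
noncomputable def Blow {N : ℕ} {nd : Fin N → ℕ}
    (A : Matrix (Σ i : Fin N, Fin (nd i)) (Σ i : Fin N, Fin (nd i)) ℝ)
    (i k : Fin N) :
    Matrix {p : Fin (nd i) × Fin (nd i) // p.1 < p.2} (Fin (nd k) × Fin (nd i)) ℝ :=
  Lmat (nd i) *
    ((blk A i k ⊗ₖ (1 : Matrix (Fin (nd i)) (Fin (nd i)) ℝ))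
      - ((1 : Matrix (Fin (nd i)) (Fin (nd i)) ℝ) ⊗ₖ blk A i k) * Qmat (nd k) (nd i))

noncomputable def Bhigh {N : ℕ} {nd : Fin N → ℕ}
    (A : Matrix (Σ i : Fin N, Fin (nd i)) (Σ i : Fin N, Fin (nd i)) ℝ)
    (i k : Fin N) :
    Matrix {p : Fin (nd i) × Fin (nd i) // p.1 < p.2} (Fin (nd i) × Fin (nd k)) ℝ :=
  Lmat (nd i) *
    (((1 : Matrix (Fin (nd i)) (Fin (nd i)) ℝ) ⊗ₖ blk A i k)
      - (blk A i k ⊗ₖ (1 : Matrix (Fin (nd i)) (Fin (nd i)) ℝ)) * Qmat (nd i) (nd k))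


section helpers

open Finset

private lemma Lmat_mul {n : ℕ} {α : Type*} (M : Matrix (Fin n × Fin n) α ℝ)
    (p : {p : Fin n × Fin n // p.1 < p.2}) (c : α) :
    (Lmat n * M) p c = M p.1 c := by
  simp [Matrix.mul_apply, Lmat]

private lemma Mmat_eq {n : ℕ} (s : Fin n × Fin n) (q : {p : Fin n × Fin n // p.1 < p.2}) :
    Mmat n s q = (if s = q.1 then (1 : ℝ) else 0) - (if s = (q.1.2, q.1.1) then 1 else 0) := by
  have hne : q.1 ≠ (q.1.2, q.1.1) := by
    intro h
    have h1 : q.1.1 = q.1.2 := congrArg Prod.fst h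
    exact absurd q.2 (by rw [h1]; exact lt_irrefl _)
  unfold Mmat
  split_ifs with h1 h2 h2 <;> simp_all

private lemma sum_pairs {n : ℕ} (g : Fin n × Fin n → ℝ) (hdiag : ∀ c, g (c, c) = 0) :
    ∑ q : {p : Fin n × Fin n // p.1 < p.2}, (g q.1 + g (q.1.2, q.1.1))
      = ∑ q : Fin n × Fin n, g q := by
  classical
  have h1 : ∀ q : Fin n × Fin n, g q =
      (if q.1 < q.2 then g q else 0) + (if q.2 < q.1 then g q else 0) := by
    rintro ⟨c, d⟩
    rcases lt_trichotomy c d with h | h | h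
    · simp [h, h.asymm]
    · subst h; simp [hdiag]
    · simp [h, h.asymm]
  have h2 : ∑ q : Fin n × Fin n, (if q.2 < q.1 then g q else 0)
      = ∑ q : Fin n × Fin n, (if q.1 < q.2 then g (q.2, q.1) else 0) := by
    refine (Fintype.sum_equiv (Equiv.prodComm (Fin n) (Fin n)) _ _ ?_).symm
    rintro ⟨c, d⟩
    simp
    exact if_congr Iff.rfl rfl rfl
  have key : ∑ q : Fin n × Fin n, g q
      = ∑ q ∈ Finset.univ.filter (fun q : Fin n × Fin n => q.1 < q.2), (g q + g (q.2, q.1)) := by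
    rw [Finset.sum_filter]
    calc ∑ q : Fin n × Fin n, g q
        = ∑ q : Fin n × Fin n,
            ((if q.1 < q.2 then g q else 0) + (if q.2 < q.1 then g q else 0)) :=
          Finset.sum_congr rfl fun q _ => h1 q
      _ = (∑ q : Fin n × Fin n, if q.1 < q.2 then g q else 0)
            + ∑ q : Fin n × Fin n, (if q.2 < q.1 then g q else 0) := Finset.sum_add_distrib
      _ = (∑ q : Fin n × Fin n, if q.1 < q.2 then g q else 0)
            + ∑ q : Fin n × Fin n, (if q.1 < q.2 then g (q.2, q.1) else 0) := by rw [h2]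
      _ = ∑ q : Fin n × Fin n,
            ((if q.1 < q.2 then g q else 0) + (if q.1 < q.2 then g (q.2, q.1) else 0)) :=
          Finset.sum_add_distrib.symm
      _ = ∑ q : Fin n × Fin n, (if q.1 < q.2 then g q + g (q.2, q.1) else 0) :=
          Finset.sum_congr rfl fun q _ => by split_ifs <;> simp
  rw [key]
  exact (Finset.sum_subtype (Finset.univ.filter (fun q : Fin n × Fin n => q.1 < q.2))
    (fun x => by simp) (fun q => g q + g (q.2, q.1))).symm

private lemma addComp_mulVec {n : ℕ} (M Y : Matrix (Fin n) (Fin n) ℝ)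
    (hY : ∀ c d, Y d c = - Y c d) (p : {p : Fin n × Fin n // p.1 < p.2}) :
    (addComp n M).mulVec (svec n Y) p
      = (∑ c, M p.1.1 c * Y c p.1.2) + ∑ c, M p.1.2 c * Y p.1.1 c := by
  classical
  set K := M ⊗ₖ (1 : Matrix (Fin n) (Fin n) ℝ) + (1 : Matrix (Fin n) (Fin n) ℝ) ⊗ₖ M with hK
  have hentry : ∀ q : {p : Fin n × Fin n // p.1 < p.2},
      addComp n M p q = K p.1 q.1 - K p.1 (q.1.2, q.1.1) := by
    intro q
    rw [addComp, ← hK, Matrix.mul_assoc, Lmat_mul]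
    simp only [Matrix.mul_apply, Mmat_eq, mul_sub, Finset.sum_sub_distrib,
      mul_ite, mul_one, mul_zero]
    simp
  have step1 : (addComp n M).mulVec (svec n Y) p
      = ∑ q : {p : Fin n × Fin n // p.1 < p.2},
          ((K p.1 q.1 * Y q.1.1 q.1.2) + K p.1 (q.1.2, q.1.1) * Y q.1.2 q.1.1) := by
    rw [Matrix.mulVec]
    refine Finset.sum_congr rfl fun q _ => ?_
    simp only [hentry, svec]
    rw [hY (q : Fin n × Fin n).1 (q : Fin n × Fin n).2]
    ring
  rw [step1, sum_pairs (fun q => K p.1 q * Y q.1 q.2) (by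
    intro c
    have := hY c c
    have h0 : Y c c = 0 := by linarith
    simp [h0])]
  rw [hK]
  simp only [Matrix.add_apply, Matrix.kroneckerMap_apply, Matrix.one_apply]
  rw [Fintype.sum_prod_type]
  simp only [mul_add, add_mul, ite_mul, mul_ite, mul_zero, zero_mul, mul_one, one_mul,
    Finset.sum_add_distrib]
  congr 1
  · simp [Finset.sum_ite_eq, mul_comm]
  · rw [Finset.sum_comm]
    simp [Finset.sum_ite_eq, mul_comm]

private lemma sum_split {N : ℕ} (i : Fin N) (f : Fin N → ℝ) :
    ∑ k, f k = (∑ k ∈ Finset.univ.filter (fun k => k < i), f k) + f i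
      + ∑ k ∈ Finset.univ.filter (fun k => i < k), f k := by
  classical
  have h1 : ∀ k : Fin N, f k = (if k < i then f k else 0) + (if k = i then f k else 0)
      + (if i < k then f k else 0) := by
    intro k
    rcases lt_trichotomy k i with h | h | h
    · simp [h, h.asymm, h.ne]
    · subst h; simp
    · simp [h, h.asymm, h.ne']
  rw [Finset.sum_congr rfl fun k _ => h1 k]
  simp [Finset.sum_add_distrib, Finset.sum_ite_eq', ← Finset.sum_filter]

private lemma Blow_mulVec {N : ℕ} {nd : Fin N → ℕ}
    (A : Matrix (Σ i : Fin N, Fin (nd i)) (Σ i : Fin N, Fin (nd i)) ℝ) (i k : Fin N)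
    (Y : Matrix (Fin (nd k)) (Fin (nd i)) ℝ)
    (p : {p : Fin (nd i) × Fin (nd i) // p.1 < p.2}) :
    (Blow A i k).mulVec (vecr Y) p
      = (∑ c, blk A i k p.1.1 c * Y c p.1.2) - ∑ c, blk A i k p.1.2 c * Y c p.1.1 := by
  classical
  have hentry : ∀ cd : Fin (nd k) × Fin (nd i),
      Blow A i k p cd
        = blk A i k p.1.1 cd.1 * (if p.1.2 = cd.2 then 1 else 0)
          - (if p.1.1 = cd.2 then 1 else 0) * blk A i k p.1.2 cd.1 := by
    intro cd
    rw [Blow, Lmat_mul]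
    simp [Matrix.sub_apply, Matrix.kroneckerMap_apply, Matrix.one_apply, Matrix.mul_apply,
      Qmat, mul_ite, mul_one, mul_zero, Finset.sum_ite_eq']
  simp only [Matrix.mulVec, dotProduct]
  rw [Fintype.sum_prod_type]
  simp only [hentry, vecr, sub_mul, ite_mul, one_mul, zero_mul, mul_ite, mul_one, mul_zero,
    Finset.sum_sub_distrib]
  congr 1 <;> simp [Finset.sum_ite_eq]

private lemma Bhigh_mulVec {N : ℕ} {nd : Fin N → ℕ}
    (A : Matrix (Σ i : Fin N, Fin (nd i)) (Σ i : Fin N, Fin (nd i)) ℝ) (i k : Fin N)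
    (Y : Matrix (Fin (nd i)) (Fin (nd k)) ℝ)
    (p : {p : Fin (nd i) × Fin (nd i) // p.1 < p.2}) :
    (Bhigh A i k).mulVec (vecr Y) p
      = (∑ d, blk A i k p.1.2 d * Y p.1.1 d) - ∑ d, blk A i k p.1.1 d * Y p.1.2 d := by
  classical
  have hentry : ∀ cd : Fin (nd i) × Fin (nd k),
      Bhigh A i k p cd
        = (if p.1.1 = cd.1 then 1 else 0) * blk A i k p.1.2 cd.2
          - blk A i k p.1.1 cd.2 * (if p.1.2 = cd.1 then 1 else 0) := by
    intro cd
    rw [Bhigh, Lmat_mul]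
    simp [Matrix.sub_apply, Matrix.kroneckerMap_apply, Matrix.one_apply, Matrix.mul_apply,
      Qmat, mul_ite, mul_one, mul_zero, Finset.sum_ite_eq']
  simp only [Matrix.mulVec, dotProduct]
  rw [Fintype.sum_prod_type]
  simp only [hentry, vecr, sub_mul, ite_mul, one_mul, zero_mul, mul_ite, mul_one, mul_zero,
    Finset.sum_sub_distrib]
  congr 1 <;> (rw [Finset.sum_comm]; simp [Finset.sum_ite_eq])

end helpers

/-- if `X(t)` is skew-symmetric and solves `Ẋ = A(t)X + XA(t)ᵀ`, then for
every `i` with `n_i ≥ 2`,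
`d/dt vec⃗(X_{ii}) = A_{ii}^{[2]} vec⃗(X_{ii}) + Σ_{k<i} B_{ik} vec(X_{ki})
                   + Σ_{k>i} B_{ik} vec(X_{ik})`. -/
theorem stmt6 {N : ℕ} (hN : 2 ≤ N) (nd : Fin N → ℕ) (hnd : ∀ i, 0 < nd i)
    (A : ℝ → Matrix (Σ i : Fin N, Fin (nd i)) (Σ i : Fin N, Fin (nd i)) ℝ)
    (hA : Continuous A)
    (X : ℝ → Matrix (Σ i : Fin N, Fin (nd i)) (Σ i : Fin N, Fin (nd i)) ℝ)
    (hXskew : ∀ t, (X t)ᵀ = -(X t))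
    (hode : ∀ (t : ℝ) (r c : Σ i : Fin N, Fin (nd i)),
      HasDerivAt (fun s => X s r c) ((A t * X t + X t * (A t)ᵀ) r c) t) :
    ∀ (i : Fin N), 2 ≤ nd i →
      ∀ (t : ℝ) (p : {p : Fin (nd i) × Fin (nd i) // p.1 < p.2}),
        HasDerivAt (fun s => svec (nd i) (blk (X s) i i) p)
          (((addComp (nd i) (blk (A t) i i)).mulVec (svec (nd i) (blk (X t) i i))
            + ∑ k ∈ Finset.univ.filter (fun k => k < i),
                (Blow (A t) i k).mulVec (vecr (blk (X t) k i))
            + ∑ k ∈ Finset.univ.filter (fun k => i < k),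
                (Bhigh (A t) i k).mulVec (vecr (blk (X t) i k))) p) t := by
  intro i hni t p
  obtain ⟨⟨a, b⟩, hab⟩ := p
  have hskew : ∀ r c : (Σ i : Fin N, Fin (nd i)), X t c r = - X t r c := by
    intro r c
    have := congrFun (congrFun (hXskew t) r) c
    simpa [Matrix.transpose_apply] using this
  have h := hode t ⟨i, a⟩ ⟨i, b⟩
  have hval : ((addComp (nd i) (blk (A t) i i)).mulVec (svec (nd i) (blk (X t) i i))
            + ∑ k ∈ Finset.univ.filter (fun k => k < i),
                (Blow (A t) i k).mulVec (vecr (blk (X t) k i))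
            + ∑ k ∈ Finset.univ.filter (fun k => i < k),
                (Bhigh (A t) i k).mulVec (vecr (blk (X t) i k))) ⟨(a, b), hab⟩
      = (A t * X t + X t * (A t)ᵀ) ⟨i, a⟩ ⟨i, b⟩ := by
    classical
    set q : {p : Fin (nd i) × Fin (nd i) // p.1 < p.2} := ⟨(a, b), hab⟩ with hq
    have hYii : ∀ c d : Fin (nd i), blk (X t) i i d c = - blk (X t) i i c d :=
      fun c d => hskew ⟨i, c⟩ ⟨i, d⟩
    have hrhs : (A t * X t + X t * (A t)ᵀ) ⟨i, a⟩ ⟨i, b⟩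
        = ∑ k : Fin N, ∑ c : Fin (nd k),
            (A t ⟨i, a⟩ ⟨k, c⟩ * X t ⟨k, c⟩ ⟨i, b⟩ + X t ⟨i, a⟩ ⟨k, c⟩ * A t ⟨i, b⟩ ⟨k, c⟩) := by
      rw [Matrix.add_apply, Matrix.mul_apply, Matrix.mul_apply, ← Finset.sum_add_distrib,
        ← Finset.univ_sigma_univ, Finset.sum_sigma]
      simp [Matrix.transpose_apply]
    rw [hrhs, sum_split i]
    simp only [Pi.add_apply, Finset.sum_apply]
    rw [addComp_mulVec _ _ hYii q]
    rw [Finset.sum_congr rfl fun k _ => Blow_mulVec (A t) i k (blk (X t) k i) q]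
    rw [Finset.sum_congr rfl fun k _ => Bhigh_mulVec (A t) i k (blk (X t) i k) q]
    have e1 : ((∑ c, blk (A t) i i q.1.1 c * blk (X t) i i c q.1.2)
          + ∑ c, blk (A t) i i q.1.2 c * blk (X t) i i q.1.1 c)
        = ∑ c : Fin (nd i),
            (A t ⟨i, a⟩ ⟨i, c⟩ * X t ⟨i, c⟩ ⟨i, b⟩ + X t ⟨i, a⟩ ⟨i, c⟩ * A t ⟨i, b⟩ ⟨i, c⟩) := by
      rw [← Finset.sum_add_distrib]
      exact Finset.sum_congr rfl fun c _ => by simp only [blk, hq]; ring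
    have e2 : ∀ k ∈ Finset.univ.filter (fun k => k < i),
        ((∑ c, blk (A t) i k q.1.1 c * blk (X t) k i c q.1.2)
            - ∑ c, blk (A t) i k q.1.2 c * blk (X t) k i c q.1.1)
          = ∑ c : Fin (nd k),
              (A t ⟨i, a⟩ ⟨k, c⟩ * X t ⟨k, c⟩ ⟨i, b⟩ + X t ⟨i, a⟩ ⟨k, c⟩ * A t ⟨i, b⟩ ⟨k, c⟩) := by
      intro k _
      rw [← Finset.sum_sub_distrib]
      refine Finset.sum_congr rfl fun c _ => ?_
      rw [show X t ⟨i, a⟩ ⟨k, c⟩ = - X t ⟨k, c⟩ ⟨i, a⟩ from hskew _ _]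
      simp only [blk, hq]
      ring
    have e3 : ∀ k ∈ Finset.univ.filter (fun k => i < k),
        ((∑ d, blk (A t) i k q.1.2 d * blk (X t) i k q.1.1 d)
            - ∑ d, blk (A t) i k q.1.1 d * blk (X t) i k q.1.2 d)
          = ∑ c : Fin (nd k),
              (A t ⟨i, a⟩ ⟨k, c⟩ * X t ⟨k, c⟩ ⟨i, b⟩ + X t ⟨i, a⟩ ⟨k, c⟩ * A t ⟨i, b⟩ ⟨k, c⟩) := by
      intro k _
      rw [← Finset.sum_sub_distrib]
      refine Finset.sum_congr rfl fun c _ => ?_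
      rw [show X t ⟨k, c⟩ ⟨i, b⟩ = - X t ⟨i, b⟩ ⟨k, c⟩ from hskew _ _]
      simp only [blk, hq]
      ring
    rw [Finset.sum_congr rfl e2, Finset.sum_congr rfl e3, e1]
    ring
  exact hval ▸ h
end

section
/- Let N ≥ 2 and positive integers n_1, …, n_N with n = n_1 + … + n_N; partition matrices in ℝ^{n×n} into blocks according to these dimensions. Let A : ℝ → ℝ^{n×n} be continuous and let X : ℝ → ℝ^{n×n} be differentiable with X(t) skew-symmetric for all t, satisfying Ẋ(t) = A(t)X(t) + X(t)A(t)ᵀ. Then for all 1 ≤ i < j ≤ N and all t, d/dt vec(X_{ij}(t)) = (A_{ii} ⊗ I_{n_j} + I_{n_i} ⊗ A_{jj}) vec(X_{ij}) + G¹_{ij} vec⃗(X_{ii}) + G²_{ij} vec⃗(X_{jj}) + Σ_{k<j, k≠i} H^{ij}_{kj} vec(X_{kj}) + Σ_{k>j} H^{ij}_{kj} vec(X_{jk}) + Σ_{k<i} H^{ij}_{ki} vec(X_{ki}) + Σ_{k>i, k≠j} H^{ij}_{ki} vec(X_{ik}), where G¹_{ij} = (I_{n_i} ⊗ A_{ji})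 M_{n_i}, G²_{ij} = (A_{ij} ⊗ I_{n_j}) M_{n_j}, H^{ij}_{kj} = A_{ik} ⊗ I_{n_j} if k < j and H^{ij}_{kj} = −(A_{ik} ⊗ I_{n_j}) Q_{n_j,n_k} if k > j, and H^{ij}_{ki} = I_{n_i} ⊗ A_{jk} if k > i and H^{ij}_{ki} = −(I_{n_i} ⊗ A_{jk}) Q_{n_k,n_i} if k < i (all blocks evaluated at time t). -/
open Matrix
open scoped Kronecker

lemma Qmat_mulVec {p q : ℕ} (Y : Matrix (Fin p) (Fin q) ℝ) :
    (Qmat p q).mulVec (vecr Y) = vecr Yᵀ := by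
  funext r
  rw [Matrix.mulVec, dotProduct]
  rw [Fintype.sum_eq_single ((r.2, r.1) : Fin p × Fin q)]
  · simp [Qmat, vecr]
  · intro c hc
    have : r ≠ (c.2, c.1) := by
      intro h; apply hc; rw [h]
    simp [Qmat, this]

lemma Mmat_mulVec {n : ℕ} (X : Matrix (Fin n) (Fin n) ℝ) (hX : Xᵀ = -X) :
    (Mmat n).mulVec (svec n X) = vecr X := by
  have hX' : ∀ a b : Fin n, X b a = -X a b := fun a b => congrFun (congrFun hX a) b
  funext q
  obtain ⟨q1, q2⟩ := q
  rw [Matrix.mulVec, dotProduct]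
  rcases lt_trichotomy q1 q2 with h | h | h
  · rw [Fintype.sum_eq_single (⟨(q1, q2), h⟩ : {p : Fin n × Fin n // p.1 < p.2})]
    · simp [Mmat, svec, vecr]
    · intro c hc
      have h1 : (q1, q2) ≠ c.1 := by
        intro he; apply hc; exact Subtype.ext he.symm
      have h2 : (q1, q2) ≠ (c.1.2, c.1.1) := by
        intro he
        have := c.2
        rw [Prod.mk.injEq] at he
        omega
      simp [Mmat, h1, h2]
  · have hz : X q1 q2 = 0 := by
      have := hX' q1 q2; rw [h] at this ⊢; linarith
    rw [Finset.sum_eq_zero, vecr]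
    · simp [hz]
    · intro c _
      have h1 : (q1, q2) ≠ c.1 := by
        intro he; have := c.2; rw [← he] at this; exact absurd this (by simp [h])
      have h2 : (q1, q2) ≠ (c.1.2, c.1.1) := by
        intro he; have := c.2; rw [Prod.mk.injEq] at he; omega
      simp [Mmat, h1, h2]
  · rw [Fintype.sum_eq_single (⟨(q2, q1), h⟩ : {p : Fin n × Fin n // p.1 < p.2})]
    · have hne : ((q1, q2) : Fin n × Fin n) ≠ (q2, q1) := by
        intro he; rw [Prod.mk.injEq] at he; omega
      show Mmat n (q1, q2) ⟨(q2, q1), h⟩ * svec n X ⟨(q2, q1), h⟩ = vecr X (q1, q2)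
      simp [Mmat, svec, vecr, hne, hX' q2 q1]
    · intro c hc
      have h1 : (q1, q2) ≠ c.1 := by
        intro he; have := c.2; rw [← he] at this
        exact absurd this (by simp; omega)
      have h2 : (q1, q2) ≠ (c.1.2, c.1.1) := by
        intro he; apply hc
        rw [Prod.mk.injEq] at he
        exact Subtype.ext (Prod.ext he.2.symm he.1.symm)
      simp [Mmat, h1, h2]

lemma kron_one_mulVec {m m' n : ℕ} (P : Matrix (Fin m) (Fin m') ℝ)
    (v : Fin m' × Fin n → ℝ) (a : Fin m) (b : Fin n) :
    ((P ⊗ₖ (1 : Matrix (Fin n) (Fin n) ℝ)).mulVec v) (a, b)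
      = ∑ c, P a c * v (c, b) := by
  rw [Matrix.mulVec, dotProduct, Fintype.sum_prod_type]
  congr 1; funext c
  simp [Matrix.one_apply, ite_mul, mul_ite]

lemma one_kron_mulVec {m n n' : ℕ} (Q : Matrix (Fin n) (Fin n') ℝ)
    (v : Fin m × Fin n' → ℝ) (a : Fin m) (b : Fin n) :
    (((1 : Matrix (Fin m) (Fin m) ℝ) ⊗ₖ Q).mulVec v) (a, b)
      = ∑ d, Q b d * v (a, d) := by
  rw [Matrix.mulVec, dotProduct, Fintype.sum_prod_type]
  rw [Finset.sum_comm]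
  congr 1; funext d
  simp [Matrix.one_apply, ite_mul, mul_ite]


lemma sum_split_hi {N : ℕ} (i j : Fin N) (hij : i < j) (f : Fin N → ℝ) :
    ∑ k, f k = f i + f j + (∑ k ∈ Finset.univ.filter (fun k => k < j ∧ k ≠ i), f k)
      + ∑ k ∈ Finset.univ.filter (fun k => j < k), f k := by
  have h1 : (Finset.univ.filter (fun k : Fin N => k < j))
      = insert i (Finset.univ.filter (fun k => k < j ∧ k ≠ i)) := by
    ext k; simp only [Finset.mem_filter, Finset.mem_insert, Finset.mem_univ, true_and]
    constructor
    · intro hk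
      by_cases hki : k = i
      · exact Or.inl hki
      · exact Or.inr ⟨hk, hki⟩
    · rintro (rfl | ⟨hk, _⟩)
      · exact hij
      · exact hk
  have h2 : (Finset.univ.filter (fun k : Fin N => ¬ k < j))
      = insert j (Finset.univ.filter (fun k => j < k)) := by
    ext k; simp only [Finset.mem_filter, Finset.mem_insert, Finset.mem_univ, true_and]
    constructor
    · intro hk
      rcases lt_or_eq_of_le (not_lt.mp hk) with h | h
      · exact Or.inr h
      · exact Or.inl h.symm
    · rintro (rfl | hk) <;> omega
  rw [← Finset.sum_filter_add_sum_filter_not Finset.univ (fun k => k < j), h1, h2,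
    Finset.sum_insert (by simp), Finset.sum_insert (by simp)]
  ring

lemma sum_split_lo {N : ℕ} (i j : Fin N) (hij : i < j) (g : Fin N → ℝ) :
    ∑ k, g k = g j + g i + (∑ k ∈ Finset.univ.filter (fun k => k < i), g k)
      + ∑ k ∈ Finset.univ.filter (fun k => i < k ∧ k ≠ j), g k := by
  have h1 : (Finset.univ.filter (fun k : Fin N => i < k))
      = insert j (Finset.univ.filter (fun k => i < k ∧ k ≠ j)) := by
    ext k; simp only [Finset.mem_filter, Finset.mem_insert, Finset.mem_univ, true_and]
    constructor
    · intro hk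
      by_cases hkj : k = j
      · exact Or.inl hkj
      · exact Or.inr ⟨hk, hkj⟩
    · rintro (rfl | ⟨hk, _⟩)
      · exact hij
      · exact hk
  have h2 : (Finset.univ.filter (fun k : Fin N => ¬ k < i))
      = insert i (Finset.univ.filter (fun k => i < k)) := by
    ext k; simp only [Finset.mem_filter, Finset.mem_insert, Finset.mem_univ, true_and]
    constructor
    · intro hk
      rcases lt_or_eq_of_le (not_lt.mp hk) with h | h
      · exact Or.inr h
      · exact Or.inl h.symm
    · rintro (rfl | hk) <;> omega
  rw [← Finset.sum_filter_add_sum_filter_not Finset.univ (fun k => k < i), h2, h1,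
    Finset.sum_insert (by simp [hij.ne]), Finset.sum_insert (by simp)]
  ring

/-- if `X(t)` is skew-symmetric and solves `Ẋ = A(t)X + XA(t)ᵀ`, then for
all `i < j`,
`d/dt vec(X_{ij}) = (A_{ii} ⊕ A_{jj}) vec(X_{ij}) + G¹_{ij} vec⃗(X_{ii}) + G²_{ij} vec⃗(X_{jj})
  + Σ_{k<j,k≠i} H^{ij}_{kj} vec(X_{kj}) + Σ_{k>j} H^{ij}_{kj} vec(X_{jk})
  + Σ_{k<i} H^{ij}_{ki} vec(X_{ki}) + Σ_{k>i,k≠j} H^{ij}_{ki} vec(X_{ik})`,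
with `G¹_{ij} = (I_{n_i} ⊗ A_{ji}) M_{n_i}`, `G²_{ij} = (A_{ij} ⊗ I_{n_j}) M_{n_j}`,
`H^{ij}_{kj} = A_{ik} ⊗ I_{n_j}` (`k < j`), `H^{ij}_{kj} = −(A_{ik} ⊗ I_{n_j}) Q_{n_j,n_k}`
(`k > j`), `H^{ij}_{ki} = I_{n_i} ⊗ A_{jk}` (`k > i`), and
`H^{ij}_{ki} = −(I_{n_i} ⊗ A_{jk}) Q_{n_k,n_i}` (`k < i`). -/
theorem stmt7 {N : ℕ} (hN : 2 ≤ N) (nd : Fin N → ℕ) (hnd : ∀ i, 0 < nd i)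
    (A : ℝ → Matrix (Σ i : Fin N, Fin (nd i)) (Σ i : Fin N, Fin (nd i)) ℝ)
    (hA : Continuous A)
    (X : ℝ → Matrix (Σ i : Fin N, Fin (nd i)) (Σ i : Fin N, Fin (nd i)) ℝ)
    (hXskew : ∀ t, (X t)ᵀ = -(X t))
    (hode : ∀ (t : ℝ) (r c : Σ i : Fin N, Fin (nd i)),
      HasDerivAt (fun s => X s r c) ((A t * X t + X t * (A t)ᵀ) r c) t) :
    ∀ (i j : Fin N), i < j → ∀ (t : ℝ) (p : Fin (nd i) × Fin (nd j)),
      HasDerivAt (fun s => vecr (blk (X s) i j) p)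
        (((blk (A t) i i ⊗ₖ (1 : Matrix (Fin (nd j)) (Fin (nd j)) ℝ)
            + (1 : Matrix (Fin (nd i)) (Fin (nd i)) ℝ) ⊗ₖ blk (A t) j j).mulVec
              (vecr (blk (X t) i j))
          + (((1 : Matrix (Fin (nd i)) (Fin (nd i)) ℝ) ⊗ₖ blk (A t) j i)
              * Mmat (nd i)).mulVec (svec (nd i) (blk (X t) i i))
          + ((blk (A t) i j ⊗ₖ (1 : Matrix (Fin (nd j)) (Fin (nd j)) ℝ))
              * Mmat (nd j)).mulVec (svec (nd j) (blk (X t) j j))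
          + ∑ k ∈ Finset.univ.filter (fun k => k < j ∧ k ≠ i),
              (blk (A t) i k ⊗ₖ (1 : Matrix (Fin (nd j)) (Fin (nd j)) ℝ)).mulVec
                (vecr (blk (X t) k j))
          + ∑ k ∈ Finset.univ.filter (fun k => j < k),
              (-(blk (A t) i k ⊗ₖ (1 : Matrix (Fin (nd j)) (Fin (nd j)) ℝ))
                * Qmat (nd j) (nd k)).mulVec (vecr (blk (X t) j k))
          + ∑ k ∈ Finset.univ.filter (fun k => k < i),
              (-((1 : Matrix (Fin (nd i)) (Fin (nd i)) ℝ) ⊗ₖ blk (A t) j k)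
                * Qmat (nd k) (nd i)).mulVec (vecr (blk (X t) k i))
          + ∑ k ∈ Finset.univ.filter (fun k => i < k ∧ k ≠ j),
              ((1 : Matrix (Fin (nd i)) (Fin (nd i)) ℝ) ⊗ₖ blk (A t) j k).mulVec
                (vecr (blk (X t) i k))) p) t := by
  intro i j hij t p
  obtain ⟨a, b⟩ := p
  have h := hode t ⟨i, a⟩ ⟨j, b⟩
  convert h using 1
  · rfl
  have hskew : (X t)ᵀ = -(X t) := hXskew t
  have hblk : ∀ k l : Fin N, (blk (X t) k l)ᵀ = -(blk (X t) l k) := by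
    intro k l
    funext c d
    have h0 := congrFun (congrFun hskew ⟨l, c⟩) ⟨k, d⟩
    simpa [blk, Matrix.transpose_apply] using h0
  set f : Fin N → ℝ := fun k => ∑ c, blk (A t) i k a c * blk (X t) k j c b with hf
  set g : Fin N → ℝ := fun k => ∑ c, blk (X t) i k a c * blk (A t) j k b c with hg
  have hrhs : (A t * X t + X t * (A t)ᵀ) ⟨i, a⟩ ⟨j, b⟩ = (∑ k, f k) + (∑ k, g k) := by
    rw [Matrix.add_apply, Matrix.mul_apply, Matrix.mul_apply,
      ← Finset.univ_sigma_univ, Finset.sum_sigma, Finset.sum_sigma]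
    simp [hf, hg, blk, Matrix.transpose_apply]
  have h1 : ((blk (A t) i i ⊗ₖ (1 : Matrix (Fin (nd j)) (Fin (nd j)) ℝ)
        + (1 : Matrix (Fin (nd i)) (Fin (nd i)) ℝ) ⊗ₖ blk (A t) j j).mulVec
          (vecr (blk (X t) i j))) (a, b) = f i + g j := by
    rw [Matrix.add_mulVec, Pi.add_apply, kron_one_mulVec, one_kron_mulVec]
    congr 1
    exact Finset.sum_congr rfl (fun d _ => mul_comm _ _)
  have h2 : ((((1 : Matrix (Fin (nd i)) (Fin (nd i)) ℝ) ⊗ₖ blk (A t) j i)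
        * Mmat (nd i)).mulVec (svec (nd i) (blk (X t) i i))) (a, b) = g i := by
    rw [← Matrix.mulVec_mulVec, Mmat_mulVec _ (hblk i i), one_kron_mulVec]
    exact Finset.sum_congr rfl (fun d _ => mul_comm _ _)
  have h3 : (((blk (A t) i j ⊗ₖ (1 : Matrix (Fin (nd j)) (Fin (nd j)) ℝ))
        * Mmat (nd j)).mulVec (svec (nd j) (blk (X t) j j))) (a, b) = f j := by
    rw [← Matrix.mulVec_mulVec, Mmat_mulVec _ (hblk j j), kron_one_mulVec]
    rfl
  have h4 : ∀ k : Fin N, ((blk (A t) i k ⊗ₖ (1 : Matrix (Fin (nd j)) (Fin (nd j)) ℝ)).mulVec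
        (vecr (blk (X t) k j))) (a, b) = f k := by
    intro k
    rw [kron_one_mulVec]
    rfl
  have h5 : ∀ k : Fin N, ((-(blk (A t) i k ⊗ₖ (1 : Matrix (Fin (nd j)) (Fin (nd j)) ℝ))
        * Qmat (nd j) (nd k)).mulVec (vecr (blk (X t) j k))) (a, b) = f k := by
    intro k
    rw [← Matrix.mulVec_mulVec, Qmat_mulVec, hblk j k, Matrix.neg_mulVec,
      Pi.neg_apply, kron_one_mulVec]
    have : vecr (-(blk (X t) k j)) = -vecr (blk (X t) k j) := rfl
    rw [this]
    simp only [Pi.neg_apply, mul_neg, Finset.sum_neg_distrib, neg_neg]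
    rfl
  have h6 : ∀ k : Fin N, ((-((1 : Matrix (Fin (nd i)) (Fin (nd i)) ℝ) ⊗ₖ blk (A t) j k)
        * Qmat (nd k) (nd i)).mulVec (vecr (blk (X t) k i))) (a, b) = g k := by
    intro k
    rw [← Matrix.mulVec_mulVec, Qmat_mulVec, hblk k i, Matrix.neg_mulVec,
      Pi.neg_apply, one_kron_mulVec]
    have : vecr (-(blk (X t) i k)) = -vecr (blk (X t) i k) := rfl
    rw [this]
    simp only [Pi.neg_apply, mul_neg, Finset.sum_neg_distrib, neg_neg]
    exact Finset.sum_congr rfl (fun d _ => mul_comm _ _)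
  have h7 : ∀ k : Fin N, (((1 : Matrix (Fin (nd i)) (Fin (nd i)) ℝ) ⊗ₖ blk (A t) j k).mulVec
        (vecr (blk (X t) i k))) (a, b) = g k := by
    intro k
    rw [one_kron_mulVec]
    exact Finset.sum_congr rfl (fun d _ => mul_comm _ _)
  simp only [Pi.add_apply, Finset.sum_apply]
  rw [h1, h2, h3, hrhs, sum_split_hi i j hij f, sum_split_lo i j hij g,
    Finset.sum_congr rfl (fun k _ => h4 k), Finset.sum_congr rfl (fun k _ => h5 k),
    Finset.sum_congr rfl (fun k _ => h6 k), Finset.sum_congr rfl (fun k _ => h7 k)]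
  ring
end

section
/- Let Δ ∈ ℝ^{p×q}, Υ ∈ ℝ^{q×p} and Γ ∈ ℝ^{q×q} be entrywise nonnegative matrices, and let G ∈ ℝ^{(p+q)×(p+q)} be the block matrix G = [[0_{p×p}, Δ],[Υ, Γ]]. Then ρ(ΥΔ + Γ) < 1 if and only if ρ(G) < 1. -/
open Matrix Filter
open scoped ENNReal

/-- The spectral radius of a real square matrix: the maximum modulus of its complex
eigenvalues, i.e. the spectral radius (in `ℝ≥0∞`) of the matrix viewed over `ℂ`. -/
noncomputable def specRad {m : Type*} [Fintype m] [DecidableEq m]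
    (A : Matrix m m ℝ) : ℝ≥0∞ :=
  spectralRadius ℂ (A.map (Complex.ofReal : ℝ → ℂ))

set_option linter.unusedSectionVars false

section Aux
variable {n : Type*} [Fintype n] [DecidableEq n]

lemma myMulVec_mono {m k : Type*} [Fintype k] {A : Matrix m k ℝ}
    (hA : ∀ i j, 0 ≤ A i j) {x y : k → ℝ}
    (h : x ≤ y) : A *ᵥ x ≤ A *ᵥ y := fun i =>
  Finset.sum_le_sum fun j _ => mul_le_mul_of_nonneg_left (h j) (hA i j)

lemma myMulVec_nonneg {m k : Type*} [Fintype k] {A : Matrix m k ℝ}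
    (hA : ∀ i j, 0 ≤ A i j) {x : k → ℝ}
    (hx : ∀ i, 0 ≤ x i) : ∀ i, 0 ≤ (A *ᵥ x) i := fun i =>
  Finset.sum_nonneg fun j _ => mul_nonneg (hA i j) (hx j)

lemma myPow_nonneg {A : Matrix n n ℝ} (hA : ∀ i j, 0 ≤ A i j) (k : ℕ) :
    ∀ i j, 0 ≤ (A ^ k) i j := by
  induction k with
  | zero => intro i j; by_cases h : i = j <;> simp [Matrix.one_apply, h]
  | succ k ih =>
    intro i j
    rw [pow_succ, Matrix.mul_apply]
    exact Finset.sum_nonneg fun l _ => mul_nonneg (ih i l) (hA l j)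

lemma pi_nnnorm_mono {x y : n → ℝ} (hx : ∀ i, 0 ≤ x i) (h : x ≤ y) : ‖x‖₊ ≤ ‖y‖₊ := by
  rw [Pi.nnnorm_def, Pi.nnnorm_def]
  apply Finset.sup_mono_fun
  intro i _
  exact abs_le_abs (h i) ((neg_nonpos.mpr (hx i)).trans ((hx i).trans (h i)))

attribute [local instance] Matrix.linftyOpNormedRing Matrix.linftyOpNormedAlgebra
  Matrix.linftyOpSeminormedAddCommGroup

lemma map_ofReal_pow (A : Matrix n n ℝ) (k : ℕ) :
    (A.map (Complex.ofReal : ℝ → ℂ)) ^ k = (A ^ k).map (Complex.ofReal : ℝ → ℂ) := by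
  induction k with
  | zero => simp
  | succ k ih =>
    rw [pow_succ, pow_succ, ih]
    ext i j
    simp [Matrix.mul_apply, Matrix.map_apply]

lemma nnnorm_map_ofReal (A : Matrix n n ℝ) :
    ‖A.map (Complex.ofReal : ℝ → ℂ)‖₊ = ‖A‖₊ := by
  simp only [Matrix.linfty_opNNNorm_def, Matrix.map_apply, Complex.nnnorm_real]

/-- Collatz–Wielandt style lower bound for the spectral radius of a nonnegative matrix. -/
lemma cw_lower {A : Matrix n n ℝ} (hA : ∀ i j, 0 ≤ A i j) {t : ℝ} (ht : 0 ≤ t)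
    {w : n → ℝ} (hw : ∀ i, 0 ≤ w i) (hw0 : w ≠ 0) (hsub : t • w ≤ A *ᵥ w) :
    ENNReal.ofReal t ≤ specRad A := by
  haveI : CompleteSpace (Matrix n n ℂ) := FiniteDimensional.complete ℂ _
  set B : Matrix n n ℂ := A.map (Complex.ofReal : ℝ → ℂ) with hB
  have key : ∀ k : ℕ, (t ^ k) • w ≤ (A ^ k) *ᵥ w := by
    intro k
    induction k with
    | zero => simp [Matrix.one_mulVec]
    | succ k ih =>
      calc (t ^ (k+1)) • w = t • ((t ^ k) • w) := by
            rw [← smul_assoc]; norm_num [pow_succ, mul_comm]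
        _ ≤ t • ((A ^ k) *ᵥ w) := smul_le_smul_of_nonneg_left ih ht
        _ = (A ^ k) *ᵥ (t • w) := (Matrix.mulVec_smul _ _ _).symm
        _ ≤ (A ^ k) *ᵥ (A *ᵥ w) := myMulVec_mono (myPow_nonneg hA k) hsub
        _ = (A ^ (k+1)) *ᵥ w := by rw [Matrix.mulVec_mulVec, ← pow_succ]
  have hwnn : ‖w‖₊ ≠ 0 := by simpa using hw0
  have hnormle : ∀ k : ℕ, ‖t‖₊ ^ k ≤ ‖B ^ k‖₊ := by
    intro k
    have h1 : ‖(t ^ k) • w‖₊ ≤ ‖(A ^ k) *ᵥ w‖₊ :=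
      pi_nnnorm_mono (fun i => smul_nonneg (pow_nonneg ht k) (hw i)) (key k)
    have h2 : ‖(A ^ k) *ᵥ w‖₊ ≤ ‖A ^ k‖₊ * ‖w‖₊ := Matrix.linfty_opNNNorm_mulVec _ _
    have h3 : ‖(t ^ k) • w‖₊ = ‖t‖₊ ^ k * ‖w‖₊ := by
      rw [nnnorm_smul, nnnorm_pow]
    have h4 : ‖B ^ k‖₊ = ‖A ^ k‖₊ := by
      rw [hB, map_ofReal_pow]
      exact nnnorm_map_ofReal _
    have := (h3 ▸ h1).trans h2
    rw [h4]
    exact le_of_mul_le_mul_right this (pos_iff_ne_zero.mpr hwnn)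
  -- pass to the limsup and Gelfand bound
  have hfreq : ∀ k : ℕ, 1 ≤ k → (ENNReal.ofReal t) ≤ (‖B ^ k‖₊ : ℝ≥0∞) ^ (1 / (k:ℝ)) := by
    intro k hk
    have hk0 : (k : ℝ) ≠ 0 := by positivity
    have h5 : ((‖t‖₊ : ℝ≥0∞) ^ k) ≤ (‖B ^ k‖₊ : ℝ≥0∞) := by
      rw [← ENNReal.coe_pow]
      exact_mod_cast hnormle k
    have h6 := ENNReal.rpow_le_rpow h5 (by positivity : (0:ℝ) ≤ 1 / (k:ℝ))
    rw [← ENNReal.rpow_natCast ((‖t‖₊ : ℝ≥0∞)) k, ← ENNReal.rpow_mul,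
      mul_one_div, div_self hk0, ENNReal.rpow_one] at h6
    rwa [← Real.norm_of_nonneg ht, ofReal_norm, enorm_eq_nnnorm]
  have hlim : (ENNReal.ofReal t) ≤
      limsup (fun k : ℕ => (‖B ^ k‖₊ : ℝ≥0∞) ^ (1 / (k:ℝ))) atTop := by
    apply le_limsup_of_frequently_le
    · exact Filter.frequently_atTop.mpr fun a => ⟨max a 1, le_max_left _ _,
        hfreq _ (le_max_right _ _)⟩
    · exact Filter.isBoundedUnder_of ⟨⊤, fun x => le_top⟩
  exact hlim.trans (spectrum.limsup_pow_nnnorm_pow_one_div_le_spectralRadius B)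


/-- From a complex eigenvalue of a nonnegative real matrix, produce a nonnegative
subinvariant vector for the modulus. -/
lemma exists_subinvariant {A : Matrix n n ℝ} (hA : ∀ i j, 0 ≤ A i j) {μ : ℂ}
    (hμ : μ ∈ spectrum ℂ (A.map (Complex.ofReal : ℝ → ℂ))) :
    ∃ w : n → ℝ, (∀ i, 0 ≤ w i) ∧ w ≠ 0 ∧ ‖μ‖ • w ≤ A *ᵥ w := by
  set B : Matrix n n ℂ := A.map (Complex.ofReal : ℝ → ℂ) with hB
  rw [spectrum.mem_iff] at hμ
  rw [Matrix.isUnit_iff_isUnit_det, isUnit_iff_ne_zero, not_not] at hμ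
  obtain ⟨v, hv0, hv⟩ := (Matrix.exists_mulVec_eq_zero_iff).mpr hμ
  have heig : B *ᵥ v = μ • v := by
    have h1 : (algebraMap ℂ (Matrix n n ℂ)) μ - B = μ • (1 : Matrix n n ℂ) - B := by
      rw [Algebra.algebraMap_eq_smul_one]
    rw [h1, Matrix.sub_mulVec, Matrix.smul_mulVec, Matrix.one_mulVec, sub_eq_zero] at hv
    exact hv.symm
  refine ⟨fun i => ‖v i‖, fun i => norm_nonneg _, ?_, ?_⟩
  · intro h
    apply hv0
    ext i
    have := congrFun h i
    simpa using this
  · intro i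
    have h2 : ‖μ‖ * ‖v i‖ = ‖(B *ᵥ v) i‖ := by
      rw [heig]; simp
    have h3 : ‖(B *ᵥ v) i‖ ≤ ∑ j, A i j * ‖v j‖ := by
      rw [Matrix.mulVec, dotProduct]
      refine (norm_sum_le _ _).trans ?_
      apply Finset.sum_le_sum
      intro j _
      rw [norm_mul, hB, Matrix.map_apply, Complex.norm_real, Real.norm_of_nonneg (hA i j)]
    calc (‖μ‖ • fun i => ‖v i‖) i = ‖μ‖ * ‖v i‖ := rfl
      _ ≤ ∑ j, A i j * ‖v j‖ := h2 ▸ h3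
      _ = (A *ᵥ fun j => ‖v j‖) i := rfl

/-- Extract an eigenvalue of large modulus when the spectral radius is at least 1. -/
lemma exists_spec_gt {A : Matrix n n ℝ} (hA1 : 1 ≤ specRad A) {s : ℝ}
    (hs0 : 0 ≤ s) (hs1 : s < 1) :
    ∃ μ ∈ spectrum ℂ (A.map (Complex.ofReal : ℝ → ℂ)), s < ‖μ‖ := by
  have h1 : ENNReal.ofReal s < specRad A :=
    lt_of_lt_of_le (ENNReal.ofReal_lt_one.mpr hs1) hA1
  rw [specRad, spectralRadius] at h1
  obtain ⟨μ, hμ⟩ := lt_iSup_iff.mp h1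
  obtain ⟨hmem, hlt⟩ := lt_iSup_iff.mp hμ
  refine ⟨μ, hmem, ?_⟩
  rw [← enorm_eq_nnnorm, ← ofReal_norm] at hlt
  exact (ENNReal.ofReal_lt_ofReal_iff_of_nonneg hs0).mp hlt

lemma one_le_of_forall_lt {x : ℝ≥0∞} (h : ∀ s : ℝ, 0 < s → s < 1 → ENNReal.ofReal s ≤ x) :
    1 ≤ x := by
  by_contra hx
  push_neg at hx
  have hxt : x ≠ ⊤ := hx.ne_top
  have hr : x.toReal < 1 := by
    rw [← ENNReal.toReal_one]
    exact (ENNReal.toReal_lt_toReal hxt (by simp)).mpr hx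
  set s : ℝ := (max x.toReal 0 + 1) / 2 with hsdef
  have hs0 : 0 < s := by positivity
  have hs1 : s < 1 := by
    have : max x.toReal 0 < 1 := by
      rcases max_cases x.toReal 0 with ⟨h1, _⟩ | ⟨h1, _⟩ <;> simp [h1, hr]
    rw [hsdef]; linarith
  have := h s hs0 hs1
  have hle : s ≤ x.toReal := by
    have := ENNReal.toReal_mono hxt this
    rwa [ENNReal.toReal_ofReal hs0.le] at this
  have : x.toReal < s := by
    have h2 : x.toReal ≤ max x.toReal 0 := le_max_left _ _
    rw [hsdef]
    nlinarith [le_max_right x.toReal 0]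
  linarith

end Aux

section Main

variable {p q : ℕ}

lemma dir1 {Δ : Matrix (Fin p) (Fin q) ℝ} {Υ : Matrix (Fin q) (Fin p) ℝ}
    {Γ : Matrix (Fin q) (Fin q) ℝ}
    (hΔ : ∀ i j, 0 ≤ Δ i j) (hΥ : ∀ i j, 0 ≤ Υ i j) (hΓ : ∀ i j, 0 ≤ Γ i j)
    (hM1 : 1 ≤ specRad (Υ * Δ + Γ)) :
    1 ≤ specRad (Matrix.fromBlocks (0 : Matrix (Fin p) (Fin p) ℝ) Δ Υ Γ) := by
  set M : Matrix (Fin q) (Fin q) ℝ := Υ * Δ + Γ with hMdef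
  set G := Matrix.fromBlocks (0 : Matrix (Fin p) (Fin p) ℝ) Δ Υ Γ with hGdef
  have hUD : ∀ i j, 0 ≤ (Υ * Δ) i j := fun i j => by
    rw [Matrix.mul_apply]
    exact Finset.sum_nonneg fun k _ => mul_nonneg (hΥ i k) (hΔ k j)
  have hM : ∀ i j, 0 ≤ M i j := fun i j => add_nonneg (hUD i j) (hΓ i j)
  have hG : ∀ i j, 0 ≤ G i j := by
    rintro (i | i) (j | j) <;>
      simp only [hGdef, Matrix.fromBlocks_apply₁₁, Matrix.fromBlocks_apply₁₂,
        Matrix.fromBlocks_apply₂₁, Matrix.fromBlocks_apply₂₂, Matrix.zero_apply, le_refl]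
    · exact hΔ i j
    · exact hΥ i j
    · exact hΓ i j
  apply one_le_of_forall_lt
  intro s hs0 hs1
  obtain ⟨μ, hμmem, hμ⟩ := exists_spec_gt hM1 hs0.le hs1
  set t : ℝ := ‖μ‖ with htdef
  have ht0 : 0 < t := hs0.trans hμ
  obtain ⟨w, hw, hw0, hsub⟩ := exists_subinvariant hM hμmem
  set r : ℝ := min t (Real.sqrt t) with hrdef
  have hr0 : 0 < r := lt_min ht0 (Real.sqrt_pos.mpr ht0)
  have hr2 : r ^ 2 ≤ t := by
    have : r ≤ Real.sqrt t := min_le_right _ _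
    calc r ^ 2 ≤ Real.sqrt t ^ 2 := by nlinarith [hr0.le]
      _ = t := Real.sq_sqrt ht0.le
  have hrs : s < r := by
    apply lt_min hμ
    rcases le_or_gt t 1 with h | h
    · exact lt_of_lt_of_le hμ ((Real.le_sqrt ht0.le ht0.le).mpr (by nlinarith))
    · have h2 : (1:ℝ) < Real.sqrt t := by
        rw [show (1:ℝ) = Real.sqrt 1 by simp]
        exact Real.sqrt_lt_sqrt (by norm_num) h
      linarith
  -- the subinvariance inequality, componentwise
  have hX : ∀ i, 0 ≤ ((Υ * Δ) *ᵥ w) i := myMulVec_nonneg hUD hw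
  have hY : ∀ i, 0 ≤ (Γ *ᵥ w) i := myMulVec_nonneg hΓ hw
  have hsub' : ∀ i, t * w i ≤ ((Υ * Δ) *ᵥ w) i + (Γ *ᵥ w) i := by
    intro i
    have := hsub i
    rwa [hMdef, Matrix.add_mulVec, Pi.smul_apply, smul_eq_mul, Pi.add_apply] at this
  have claim2 : ∀ i, r ^ 2 * w i ≤ ((Υ * Δ) *ᵥ w) i + r * (Γ *ᵥ w) i := by
    intro i
    rcases le_or_gt 1 r with h1 | h1
    · have : r ^ 2 * w i ≤ t * w i := mul_le_mul_of_nonneg_right hr2 (hw i)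
      nlinarith [hsub' i, hY i]
    · have htlt : t < 1 := by
        by_contra ht1
        push_neg at ht1
        have : (1:ℝ) ≤ Real.sqrt t := by
          rw [show (1:ℝ) = Real.sqrt 1 by simp]
          exact Real.sqrt_le_sqrt ht1
        have : (1:ℝ) ≤ r := le_min ht1 this
        linarith
      have hrt : r = t := by
        rw [hrdef, min_eq_left]
        exact (Real.le_sqrt ht0.le ht0.le).mpr (by nlinarith)
      rw [hrt]
      nlinarith [hsub' i, hX i, hw i, mul_le_mul_of_nonneg_left (hsub' i) ht0.le]
  -- build the subinvariant vector for G
  set z : (Fin p ⊕ Fin q) → ℝ := Sum.elim (r⁻¹ • (Δ *ᵥ w)) w with hzdef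
  have hz : ∀ i, 0 ≤ z i := by
    rintro (i | i)
    · exact mul_nonneg (inv_nonneg.mpr hr0.le) (myMulVec_nonneg hΔ hw i)
    · exact hw i
  have hz0 : z ≠ 0 := by
    intro h
    apply hw0
    ext i
    have := congrFun h (Sum.inr i)
    simpa [hzdef] using this
  have hzsub : r • z ≤ G *ᵥ z := by
    rw [hGdef, Matrix.fromBlocks_mulVec]
    have hcl : z ∘ Sum.inl = r⁻¹ • (Δ *ᵥ w) := rfl
    have hcr : z ∘ Sum.inr = w := rfl
    rw [hcl, hcr]
    rintro (i | i)
    · simp only [Pi.smul_apply, hzdef, Sum.elim_inl, smul_eq_mul, Sum.elim_inr]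
      rw [Matrix.zero_mulVec]
      simp only [Pi.add_apply, Pi.zero_apply, zero_add, Pi.smul_apply, smul_eq_mul]
      rw [← mul_assoc, mul_inv_cancel₀ hr0.ne', one_mul]
    · simp only [Pi.smul_apply, hzdef, Sum.elim_inr, smul_eq_mul]
      rw [Matrix.mulVec_smul, Matrix.mulVec_mulVec]
      simp only [Pi.add_apply, Pi.smul_apply, smul_eq_mul]
      calc r * w i = r⁻¹ * (r ^ 2 * w i) := by
            field_simp
        _ ≤ r⁻¹ * (((Υ * Δ) *ᵥ w) i + r * (Γ *ᵥ w) i) :=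
            mul_le_mul_of_nonneg_left (claim2 i) (inv_nonneg.mpr hr0.le)
        _ = r⁻¹ * ((Υ * Δ) *ᵥ w) i + (Γ *ᵥ w) i := by
            field_simp
  have := cw_lower hG hr0.le hz hz0 hzsub
  exact le_trans (ENNReal.ofReal_le_ofReal hrs.le) this

lemma dir2 {Δ : Matrix (Fin p) (Fin q) ℝ} {Υ : Matrix (Fin q) (Fin p) ℝ}
    {Γ : Matrix (Fin q) (Fin q) ℝ}
    (hΔ : ∀ i j, 0 ≤ Δ i j) (hΥ : ∀ i j, 0 ≤ Υ i j) (hΓ : ∀ i j, 0 ≤ Γ i j)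
    (hG1 : 1 ≤ specRad (Matrix.fromBlocks (0 : Matrix (Fin p) (Fin p) ℝ) Δ Υ Γ)) :
    1 ≤ specRad (Υ * Δ + Γ) := by
  set M : Matrix (Fin q) (Fin q) ℝ := Υ * Δ + Γ with hMdef
  set G := Matrix.fromBlocks (0 : Matrix (Fin p) (Fin p) ℝ) Δ Υ Γ with hGdef
  have hUD : ∀ i j, 0 ≤ (Υ * Δ) i j := fun i j => by
    rw [Matrix.mul_apply]
    exact Finset.sum_nonneg fun k _ => mul_nonneg (hΥ i k) (hΔ k j)
  have hM : ∀ i j, 0 ≤ M i j := fun i j => add_nonneg (hUD i j) (hΓ i j)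
  have hG : ∀ i j, 0 ≤ G i j := by
    rintro (i | i) (j | j) <;>
      simp only [hGdef, Matrix.fromBlocks_apply₁₁, Matrix.fromBlocks_apply₁₂,
        Matrix.fromBlocks_apply₂₁, Matrix.fromBlocks_apply₂₂, Matrix.zero_apply, le_refl]
    · exact hΔ i j
    · exact hΥ i j
    · exact hΓ i j
  apply one_le_of_forall_lt
  intro s hs0 hs1
  have hss0 : 0 < Real.sqrt s := Real.sqrt_pos.mpr hs0
  have hss1 : Real.sqrt s < 1 := by
    rw [show (1:ℝ) = Real.sqrt 1 by simp]
    exact Real.sqrt_lt_sqrt hs0.le hs1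
  obtain ⟨μ, hμmem, hμ⟩ := exists_spec_gt hG1 hss0.le hss1
  set t : ℝ := ‖μ‖ with htdef
  have ht0 : 0 < t := hss0.trans hμ
  obtain ⟨w, hw, hw0, hsub⟩ := exists_subinvariant hG hμmem
  set w1 : Fin p → ℝ := w ∘ Sum.inl with hw1def
  set w2 : Fin q → ℝ := w ∘ Sum.inr with hw2def
  have hsubl : ∀ i, t * w1 i ≤ (Δ *ᵥ w2) i := by
    intro i
    have := hsub (Sum.inl i)
    rw [hGdef, Matrix.fromBlocks_mulVec] at this
    simp [Matrix.zero_mulVec] at this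
    exact this
  have hsubr : ∀ i, t * w2 i ≤ (Υ *ᵥ w1) i + (Γ *ᵥ w2) i := by
    intro i
    have := hsub (Sum.inr i)
    rw [hGdef, Matrix.fromBlocks_mulVec] at this
    simp at this
    exact this
  have hw2 : ∀ i, 0 ≤ w2 i := fun i => hw _
  have hw20 : w2 ≠ 0 := by
    intro h
    apply hw0
    have hz1 : ∀ i, w1 i = 0 := by
      intro i
      have h1 := hsubl i
      rw [h, Matrix.mulVec_zero, Pi.zero_apply] at h1
      have h2 : 0 ≤ w1 i := hw (Sum.inl i)
      nlinarith [ht0]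
    ext (i | i)
    · exact hz1 i
    · exact congrFun h i
  -- key inequality
  have hkey : ∀ i, t ^ 2 * w2 i ≤ ((Υ * Δ) *ᵥ w2) i + t * (Γ *ᵥ w2) i := by
    intro i
    have h1 : (Υ *ᵥ (t • w1)) i ≤ (Υ *ᵥ (Δ *ᵥ w2)) i :=
      myMulVec_mono hΥ (fun j => by simpa using hsubl j) i
    rw [Matrix.mulVec_smul, Matrix.mulVec_mulVec] at h1
    have h2 := hsubr i
    simp only [Pi.smul_apply, smul_eq_mul] at h1
    nlinarith [mul_le_mul_of_nonneg_left h2 ht0.le]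
  rcases le_or_gt t 1 with h1 | h1
  · have hsub2 : t ^ 2 • w2 ≤ M *ᵥ w2 := by
      intro i
      rw [hMdef, Matrix.add_mulVec, Pi.smul_apply, smul_eq_mul, Pi.add_apply]
      have hY : 0 ≤ (Γ *ᵥ w2) i := myMulVec_nonneg hΓ hw2 i
      nlinarith [hkey i]
    have := cw_lower hM (by positivity) hw2 hw20 hsub2
    refine le_trans (ENNReal.ofReal_le_ofReal ?_) this
    calc s = Real.sqrt s ^ 2 := (Real.sq_sqrt hs0.le).symm
      _ ≤ t ^ 2 := by nlinarith
  · have hsub2 : t • w2 ≤ M *ᵥ w2 := by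
      intro i
      rw [hMdef, Matrix.add_mulVec, Pi.smul_apply, smul_eq_mul, Pi.add_apply]
      have hX : 0 ≤ ((Υ * Δ) *ᵥ w2) i := myMulVec_nonneg hUD hw2 i
      nlinarith [hkey i]
    have := cw_lower hM ht0.le hw2 hw20 hsub2
    exact le_trans (ENNReal.ofReal_le_ofReal (by linarith)) this

end Main

/-- for entrywise nonnegative `Δ ∈ ℝ^{p×q}`, `Υ ∈ ℝ^{q×p}`, `Γ ∈ ℝ^{q×q}`
and the block matrix `G = [[0, Δ], [Υ, Γ]]`, one has `ρ(ΥΔ + Γ) < 1 ↔ ρ(G) < 1`. -/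
theorem stmt9 (p q : ℕ)
    (Δ : Matrix (Fin p) (Fin q) ℝ) (Υ : Matrix (Fin q) (Fin p) ℝ)
    (Γ : Matrix (Fin q) (Fin q) ℝ)
    (hΔ : ∀ i j, 0 ≤ Δ i j) (hΥ : ∀ i j, 0 ≤ Υ i j) (hΓ : ∀ i j, 0 ≤ Γ i j) :
    specRad (Υ * Δ + Γ) < 1 ↔
      specRad (Matrix.fromBlocks (0 : Matrix (Fin p) (Fin p) ℝ) Δ Υ Γ) < 1 := by
  constructor
  · intro hM
    by_contra hG
    push_neg at hG
    exact absurd hM (not_lt.mpr (dir2 hΔ hΥ hΓ hG))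
  · intro hG
    by_contra hM
    push_neg at hM
    exact absurd hG (not_lt.mpr (dir1 hΔ hΥ hΓ hM))
end

section
/- Let Δ ∈ ℝ^{p×q}, Υ ∈ ℝ^{q×p} and Γ ∈ ℝ^{q×q} be entrywise nonnegative matrices, and let G ∈ ℝ^{(p+q)×(p+q)} be the block matrix G = [[0_{p×p}, Δ],[Υ, Γ]]. Then ρ(G) < 1 if and only if both ρ(Γ) < 1 (so that I − Γ is invertible) and ρ(Δ (I − Γ)^{−1} Υ) < 1. -/
open Matrix
open scoped ENNReal

open Filter


section Aux
variable {m : Type*} [Fintype m] [DecidableEq m]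

lemma mul_nonneg_entry {l n o : Type*} [Fintype n] {M : Matrix l n ℝ} {N : Matrix n o ℝ}
    (hM : ∀ i j, 0 ≤ M i j) (hN : ∀ i j, 0 ≤ N i j) : ∀ i j, 0 ≤ (M * N) i j := by
  intro i j
  rw [Matrix.mul_apply]
  exact Finset.sum_nonneg fun k _ => mul_nonneg (hM i k) (hN k j)

lemma pow_nonneg_entry {A : Matrix m m ℝ} (hA : ∀ i j, 0 ≤ A i j) :
    ∀ (k : ℕ) (i j : m), 0 ≤ (A ^ k) i j := by
  intro k
  induction k with
  | zero => intro i j; by_cases h : i = j <;> simp [Matrix.one_apply, h]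
  | succ n ih =>
      rw [pow_succ]
      exact mul_nonneg_entry ih hA

lemma mulVec_nonneg {l n : Type*} [Fintype n] {M : Matrix l n ℝ} {v : n → ℝ}
    (hM : ∀ i j, 0 ≤ M i j) (hv : ∀ j, 0 ≤ v j) : ∀ i, 0 ≤ (M *ᵥ v) i := by
  intro i
  exact Finset.sum_nonneg fun k _ => mul_nonneg (hM i k) (hv k)

lemma mulVec_mono {l n : Type*} [Fintype n] {M : Matrix l n ℝ} {u v : n → ℝ}
    (hM : ∀ i j, 0 ≤ M i j) (h : ∀ j, u j ≤ v j) : ∀ i, (M *ᵥ u) i ≤ (M *ᵥ v) i := by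
  intro i
  exact Finset.sum_le_sum fun k _ => mul_le_mul_of_nonneg_left (h k) (hM i k)

/-- Criterion implies spectral radius < 1. -/
lemma specRad_lt_one_of_crit {A : Matrix m m ℝ} (hA : ∀ i j, 0 ≤ A i j)
    {x : m → ℝ} (hx : ∀ i, 0 < x i) (h : ∀ i, (A *ᵥ x) i < x i) : specRad A < 1 := by
  rcases isEmpty_or_nonempty m with hm | hm
  · have hsub : Subsingleton (Matrix m m ℂ) := by
      constructor; intro a b; ext i j; exact isEmptyElim i
    have : spectrum ℂ (A.map (Complex.ofReal : ℝ → ℂ)) = ∅ := by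
      ext z
      simp only [Set.mem_empty_iff_false, iff_false, spectrum.mem_iff, not_not]
      exact isUnit_of_subsingleton _
    rw [specRad, spectralRadius, this]
    simp
  · -- θ := max ratio
    set θ : ℝ := Finset.univ.sup' Finset.univ_nonempty (fun i => (A *ᵥ x) i / x i) with hθdef
    have hθlt : θ < 1 := by
      rw [hθdef, Finset.sup'_lt_iff]
      intro i _
      rw [div_lt_one (hx i)]
      exact h i
    have hθ0 : 0 ≤ θ := by
      obtain ⟨i⟩ := hm
      refine le_trans ?_ (Finset.le_sup' _ (Finset.mem_univ i))
      exact div_nonneg (mulVec_nonneg hA (fun j => (hx j).le) i) (hx i).le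
    have hAx : ∀ i, (A *ᵥ x) i ≤ θ * x i := by
      intro i
      have := Finset.le_sup' (fun i => (A *ᵥ x) i / x i) (Finset.mem_univ i)
      calc (A *ᵥ x) i = ((A *ᵥ x) i / x i) * x i := (div_mul_cancel₀ _ (hx i).ne').symm
        _ ≤ θ * x i := mul_le_mul_of_nonneg_right this (hx i).le
    -- bound each spectral value
    have key : ∀ k ∈ spectrum ℂ (A.map (Complex.ofReal : ℝ → ℂ)), ‖k‖ ≤ θ := by
      intro k hk
      rw [← AlgEquiv.spectrum_eq (Matrix.toLinAlgEquiv' : Matrix m m ℂ ≃ₐ[ℂ] _),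
        ← Module.End.hasEigenvalue_iff_mem_spectrum] at hk
      obtain ⟨v, hv⟩ := hk.exists_hasEigenvector
      have hv0 := hv.2
      have happ : (A.map (Complex.ofReal : ℝ → ℂ)) *ᵥ v = k • v := by
        have h2 := hv.apply_eq_smul
        rwa [Matrix.toLinAlgEquiv'_apply] at h2
      -- pick coordinate maximizing ‖v j‖ / x j
      obtain ⟨i, -, hi⟩ := Finset.exists_max_image Finset.univ (fun j => ‖v j‖ / x j)
        ⟨Classical.arbitrary m, Finset.mem_univ _⟩
      have hvi : 0 < ‖v i‖ := by
        by_contra hc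
        push_neg at hc
        have hvi0 : ‖v i‖ = 0 := le_antisymm hc (norm_nonneg _)
        apply hv0
        ext j
        have := hi j (Finset.mem_univ j)
        rw [hvi0, zero_div] at this
        have h3 : ‖v j‖ = (‖v j‖ / x j) * x j := (div_mul_cancel₀ _ (hx j).ne').symm
        have h4 : ‖v j‖ ≤ 0 := by nlinarith [hx j]
        simpa using le_antisymm h4 (norm_nonneg _)
      have hbound : ∀ j, ‖v j‖ ≤ (‖v i‖ / x i) * x j := by
        intro j
        have := hi j (Finset.mem_univ j)
        calc ‖v j‖ = (‖v j‖ / x j) * x j := (div_mul_cancel₀ _ (hx j).ne').symm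
          _ ≤ (‖v i‖ / x i) * x j := mul_le_mul_of_nonneg_right this (hx j).le
      have hkvi : ‖k‖ * ‖v i‖ ≤ θ * ‖v i‖ := by
        have h1 : ‖k‖ * ‖v i‖ = ‖((A.map (Complex.ofReal : ℝ → ℂ)) *ᵥ v) i‖ := by
          rw [happ]; simp [norm_smul]
        rw [h1]
        calc ‖((A.map (Complex.ofReal : ℝ → ℂ)) *ᵥ v) i‖
            ≤ ∑ j, A i j * ‖v j‖ := by
              rw [Matrix.mulVec, dotProduct]
              refine (norm_sum_le _ _).trans ?_
              refine Finset.sum_le_sum fun j _ => ?_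
              rw [Matrix.map_apply, norm_mul, Complex.norm_real,
                Real.norm_of_nonneg (hA i j)]
          _ ≤ ∑ j, A i j * ((‖v i‖ / x i) * x j) :=
              Finset.sum_le_sum fun j _ => mul_le_mul_of_nonneg_left (hbound j) (hA i j)
          _ = (‖v i‖ / x i) * (A *ᵥ x) i := by
              rw [Matrix.mulVec, dotProduct, Finset.mul_sum]
              exact Finset.sum_congr rfl fun j _ => by ring
          _ ≤ (‖v i‖ / x i) * (θ * x i) :=
              mul_le_mul_of_nonneg_left (hAx i) (div_nonneg (norm_nonneg _) (hx i).le)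
          _ = θ * ((‖v i‖ / x i) * x i) := by ring
          _ = θ * ‖v i‖ := by rw [div_mul_cancel₀ _ (hx i).ne']
      exact le_of_mul_le_mul_right (by linarith [hkvi]) hvi
    -- conclude
    calc specRad A ≤ ENNReal.ofReal θ := by
          refine iSup₂_le fun k hk => ?_
          rw [← ENNReal.ofReal_coe_nnreal, coe_nnnorm]
          exact ENNReal.ofReal_le_ofReal (key k hk)
      _ < 1 := ENNReal.ofReal_lt_one.mpr hθlt


lemma geo_bound {A : Matrix m m ℝ}
    (h : specRad A < 1) :
    ∃ C r : ℝ, 1 ≤ C ∧ 0 < r ∧ r < 1 ∧ ∀ (k : ℕ) (i j : m), |(A ^ k) i j| ≤ C * r ^ k := by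
  rcases isEmpty_or_nonempty m with hm | hm
  · exact ⟨1, 1/2, le_refl _, by norm_num, by norm_num, fun k i j => isEmptyElim i⟩
  letI := Matrix.linftyOpNormedRing (n := m) (α := ℂ)
  letI := Matrix.linftyOpNormedAlgebra (n := m) (α := ℂ) (R := ℂ)
  haveI : CompleteSpace (Matrix m m ℂ) := FiniteDimensional.complete ℂ _
  set Ac : Matrix m m ℂ := A.map (Complex.ofReal : ℝ → ℂ) with hAc
  have gel := spectrum.pow_nnnorm_pow_one_div_tendsto_nhds_spectralRadius Ac
  have hmax : max (spectralRadius ℂ Ac) (1/2 : ℝ≥0∞) < 1 := by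
    refine max_lt h ?_
    rw [ENNReal.div_lt_iff] <;> simp
  obtain ⟨ρ', hρ'1, hρ'2⟩ := exists_between hmax
  have hρ'top : ρ' ≠ ⊤ := (hρ'2.trans (by norm_num)).ne
  set r : ℝ := ρ'.toReal with hr
  have hr1 : r < 1 := by
    rw [hr, ← ENNReal.toReal_one]
    exact ENNReal.toReal_strict_mono (by norm_num) hρ'2
  have hr0 : 0 < r := by
    have h12 : (1/2 : ℝ≥0∞) < ρ' := lt_of_le_of_lt (le_max_right _ _) hρ'1
    have := ENNReal.toReal_strict_mono hρ'top h12
    rw [← hr] at this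
    norm_num at this
    linarith
  have hev : ∀ᶠ k : ℕ in atTop, (‖Ac ^ k‖₊ : ℝ≥0∞) ^ (1/(k:ℝ)) < ρ' :=
    gel.eventually_lt_const (lt_of_le_of_lt (le_max_left _ _) hρ'1)
  obtain ⟨N, hN⟩ := (hev.and (eventually_gt_atTop 0)).exists_forall_of_atTop
  have hgeom : ∀ k, N ≤ k → ‖Ac ^ k‖ ≤ r ^ k := by
    intro k hk
    obtain ⟨h1, h2⟩ := hN k hk
    have hk0 : (k : ℝ) ≠ 0 := by exact_mod_cast h2.ne'
    have h3 : ((‖Ac ^ k‖₊ : ℝ≥0∞) ^ (1/(k:ℝ))) ^ (k:ℝ) ≤ ρ' ^ (k:ℝ) :=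
      ENNReal.rpow_le_rpow h1.le (by positivity)
    rw [← ENNReal.rpow_mul, one_div, inv_mul_cancel₀ hk0, ENNReal.rpow_one] at h3
    have h4 : ρ' ^ (k:ℝ) = ENNReal.ofReal (r ^ (k:ℝ)) := by
      rw [← ENNReal.ofReal_rpow_of_pos hr0, ENNReal.ofReal_toReal hρ'top]
    rw [h4, ← ENNReal.ofReal_coe_nnreal, coe_nnnorm, ENNReal.ofReal_le_ofReal_iff (by positivity)] at h3
    rwa [Real.rpow_natCast] at h3
  set C : ℝ := 1 + ∑ k ∈ Finset.range N, ‖Ac ^ k‖ / r ^ k with hC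
  have hC1 : 1 ≤ C := by
    rw [hC]
    have : 0 ≤ ∑ k ∈ Finset.range N, ‖Ac ^ k‖ / r ^ k :=
      Finset.sum_nonneg fun k _ => div_nonneg (norm_nonneg _) (by positivity)
    linarith
  refine ⟨C, r, hC1, hr0, hr1, fun k i j => ?_⟩
  have hentry : |(A ^ k) i j| ≤ ‖Ac ^ k‖ := by
    have hpow : Ac ^ k = (A ^ k).map (Complex.ofReal : ℝ → ℂ) := by
      rw [hAc]
      have := map_pow (Complex.ofRealHom.mapMatrix : Matrix m m ℝ →+* Matrix m m ℂ) A k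
      exact this.symm
    have h5 : |(A ^ k) i j| = ‖(Ac ^ k) i j‖ := by
      rw [hpow, Matrix.map_apply, Complex.norm_real, Real.norm_eq_abs]
    rw [h5, ← coe_nnnorm, ← coe_nnnorm]
    have h6 : ‖(Ac ^ k) i j‖₊ ≤ ‖Ac ^ k‖₊ := by
      rw [Matrix.linfty_opNNNorm_def]
      refine le_trans ?_ (Finset.le_sup (Finset.mem_univ i))
      exact Finset.single_le_sum (f := fun j => ‖(Ac ^ k) i j‖₊) (fun j _ => zero_le)
        (Finset.mem_univ j)
    exact_mod_cast h6
  refine hentry.trans ?_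
  rcases lt_or_ge k N with hkN | hkN
  · have h7 : ‖Ac ^ k‖ / r ^ k ≤ C - 1 := by
      rw [hC]
      simpa using Finset.single_le_sum
        (f := fun k => ‖Ac ^ k‖ / r ^ k)
        (fun l _ => div_nonneg (norm_nonneg _) (by positivity)) (Finset.mem_range.mpr hkN)
    have h8 : ‖Ac ^ k‖ = (‖Ac ^ k‖ / r ^ k) * r ^ k := by
      field_simp
    rw [h8]
    have : (0:ℝ) < r ^ k := by positivity
    nlinarith
  · refine (hgeom k hkN).trans ?_
    have : (0:ℝ) < r ^ k := by positivity
    nlinarith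

/-- geometric series inverse -/
lemma inv_series {A : Matrix m m ℝ} (hA : ∀ i j, 0 ≤ A i j)
    (h : specRad A < 1) :
    ∃ B : Matrix m m ℝ, (∀ i j, 0 ≤ B i j) ∧ (∀ i, 1 ≤ B i i) ∧
      (1 - A) * B = 1 ∧ B * (1 - A) = 1 := by
  obtain ⟨C, r, hC, hr0, hr1, hbd⟩ := geo_bound h
  have hsum : ∀ i j, Summable fun k => (A ^ k) i j := by
    intro i j
    refine Summable.of_abs ?_
    refine Summable.of_nonneg_of_le (fun k => abs_nonneg _) (fun k => hbd k i j) ?_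
    exact (summable_geometric_of_lt_one hr0.le hr1).mul_left C
  set B : Matrix m m ℝ := Matrix.of fun i j => ∑' k, (A ^ k) i j with hB
  have hBapp : ∀ i j, B i j = ∑' k, (A ^ k) i j := fun i j => rfl
  have hB0 : ∀ i j, 0 ≤ B i j := by
    intro i j
    exact tsum_nonneg fun k => pow_nonneg_entry hA k i j
  have hBdiag : ∀ i, 1 ≤ B i i := by
    intro i
    have h1 : (A ^ 0) i i ≤ B i i :=
      Summable.le_tsum (hsum i i) 0 fun k _ => pow_nonneg_entry hA k i i
    simpa using h1
  have hAB : ∀ i k, (A * B) i k = ∑' n, (A ^ (n+1)) i k := by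
    intro i k
    rw [Matrix.mul_apply]
    have h1 : ∀ j : m, A i j * B j k = ∑' n, A i j * (A ^ n) j k := by
      intro j
      rw [hBapp, ← Summable.tsum_mul_left]
      exact hsum j k
    calc ∑ j, A i j * B j k = ∑ j, ∑' n, A i j * (A ^ n) j k := by
          exact Finset.sum_congr rfl fun j _ => h1 j
      _ = ∑' n, ∑ j, A i j * (A ^ n) j k := by
          refine (Summable.tsum_finsetSum ?_).symm
          exact fun j _ => (hsum j k).mul_left _
      _ = ∑' n, (A ^ (n+1)) i k := by
          refine tsum_congr fun n => ?_
          rw [pow_succ', Matrix.mul_apply]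
  have hBA : ∀ i k, (B * A) i k = ∑' n, (A ^ (n+1)) i k := by
    intro i k
    rw [Matrix.mul_apply]
    have h1 : ∀ j : m, B i j * A j k = ∑' n, (A ^ n) i j * A j k := by
      intro j
      rw [hBapp, ← Summable.tsum_mul_right]
      exact hsum i j
    calc ∑ j, B i j * A j k = ∑ j, ∑' n, (A ^ n) i j * A j k := by
          exact Finset.sum_congr rfl fun j _ => h1 j
      _ = ∑' n, ∑ j, (A ^ n) i j * A j k := by
          refine (Summable.tsum_finsetSum ?_).symm
          exact fun j _ => (hsum i j).mul_right _
      _ = ∑' n, (A ^ (n+1)) i k := by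
          refine tsum_congr fun n => ?_
          rw [pow_succ, Matrix.mul_apply]
  have htail : ∀ i k, B i k - (∑' n, (A ^ (n+1)) i k) = (1 : Matrix m m ℝ) i k := by
    intro i k
    have h2 := Summable.tsum_eq_zero_add (hsum i k)
    rw [hBapp, h2]
    simp [Matrix.one_apply]
  refine ⟨B, hB0, hBdiag, ?_, ?_⟩
  · ext i k
    rw [Matrix.sub_mul, Matrix.one_mul, Matrix.sub_apply, hAB]
    exact htail i k
  · ext i k
    rw [Matrix.mul_sub, Matrix.mul_one, Matrix.sub_apply, hBA]
    exact htail i k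

/-- From spectral radius < 1 to the positivity criterion. -/
lemma crit_of_specRad {A : Matrix m m ℝ} (hA : ∀ i j, 0 ≤ A i j) (h : specRad A < 1) :
    ∃ x : m → ℝ, (∀ i, 0 < x i) ∧ ∀ i, (A *ᵥ x) i < x i := by
  obtain ⟨B, hB0, hBdiag, h1, h2⟩ := inv_series hA h
  have hABeq : A * B = B - 1 := by
    have h3 : B - A * B = 1 := by rw [← h1, Matrix.sub_mul, Matrix.one_mul]
    rw [← h3]
    abel
  refine ⟨B *ᵥ (fun _ => 1), ?_, ?_⟩
  · intro i
    have hle : B i i ≤ (B *ᵥ fun _ => (1:ℝ)) i := by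
      simp only [Matrix.mulVec, dotProduct, mul_one]
      exact Finset.single_le_sum (f := fun j => B i j) (fun j _ => hB0 i j)
        (Finset.mem_univ i)
    linarith [hBdiag i]
  · intro i
    rw [Matrix.mulVec_mulVec, hABeq, Matrix.sub_mulVec, Matrix.one_mulVec]
    simp only [Pi.sub_apply]
    linarith [hBdiag i, (by simp : (fun _ => (1:ℝ)) i = 1)]

end Aux

/-- for entrywise nonnegative `Δ ∈ ℝ^{p×q}`, `Υ ∈ ℝ^{q×p}`, `Γ ∈ ℝ^{q×q}`
and the block matrix `G = [[0, Δ], [Υ, Γ]]`, one has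
`ρ(G) < 1 ↔ (ρ(Γ) < 1 ∧ ρ(Δ (I − Γ)⁻¹ Υ) < 1)`
(when `ρ(Γ) < 1`, the matrix `I − Γ` is invertible). -/
theorem stmt10 (p q : ℕ)
    (Δ : Matrix (Fin p) (Fin q) ℝ) (Υ : Matrix (Fin q) (Fin p) ℝ)
    (Γ : Matrix (Fin q) (Fin q) ℝ)
    (hΔ : ∀ i j, 0 ≤ Δ i j) (hΥ : ∀ i j, 0 ≤ Υ i j) (hΓ : ∀ i j, 0 ≤ Γ i j) :
    specRad (Matrix.fromBlocks (0 : Matrix (Fin p) (Fin p) ℝ) Δ Υ Γ) < 1 ↔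
      (specRad Γ < 1 ∧ specRad (Δ * (1 - Γ)⁻¹ * Υ) < 1) := by
  set G := Matrix.fromBlocks (0 : Matrix (Fin p) (Fin p) ℝ) Δ Υ Γ with hGdef
  have hG : ∀ i j, 0 ≤ G i j := by
    rintro (i | i) (j | j) <;>
      simp only [hGdef, Matrix.fromBlocks_apply₁₁, Matrix.fromBlocks_apply₁₂,
        Matrix.fromBlocks_apply₂₁, Matrix.fromBlocks_apply₂₂, Matrix.zero_apply, le_refl]
    · exact hΔ i j
    · exact hΥ i j
    · exact hΓ i j
  constructor
  · intro hlt
    obtain ⟨z, hz, hzlt⟩ := crit_of_specRad hG hlt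
    set u : Fin p → ℝ := z ∘ Sum.inl with hu
    set v : Fin q → ℝ := z ∘ Sum.inr with hv
    have hmv := Matrix.fromBlocks_mulVec (0 : Matrix (Fin p) (Fin p) ℝ) Δ Υ Γ z
    have hΔv : ∀ i, (Δ *ᵥ v) i < u i := by
      intro i
      have h9 := hzlt (Sum.inl i)
      rw [hGdef, hmv] at h9
      simpa [Matrix.zero_mulVec, hu, hv] using h9
    have hΥΓ : ∀ j, (Υ *ᵥ u) j + (Γ *ᵥ v) j < v j := by
      intro j
      have h9 := hzlt (Sum.inr j)
      rw [hGdef, hmv] at h9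
      simpa [hu, hv] using h9
    have hupos : ∀ i, 0 < u i := fun i => hz (Sum.inl i)
    have hvpos : ∀ j, 0 < v j := fun j => hz (Sum.inr j)
    have hΓlt : specRad Γ < 1 := by
      refine specRad_lt_one_of_crit hΓ hvpos fun j => ?_
      have h9 : 0 ≤ (Υ *ᵥ u) j := mulVec_nonneg hΥ (fun i => (hupos i).le) j
      linarith [hΥΓ j]
    obtain ⟨B, hB0, hBdiag, h1, h2⟩ := inv_series hΓ hΓlt
    have hBinv : (1 - Γ)⁻¹ = B := Matrix.inv_eq_right_inv h1
    rw [hBinv]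
    refine ⟨hΓlt, ?_⟩
    have hS : ∀ i j, 0 ≤ (Δ * B * Υ) i j :=
      mul_nonneg_entry (mul_nonneg_entry hΔ hB0) hΥ
    refine specRad_lt_one_of_crit hS hupos fun i => ?_
    have hstep1 : ∀ j, (Υ *ᵥ u) j ≤ ((1 - Γ) *ᵥ v) j := by
      intro j
      rw [Matrix.sub_mulVec, Matrix.one_mulVec]
      have := hΥΓ j
      simp only [Pi.sub_apply]
      linarith
    have hstep2 : ∀ j, (B *ᵥ (Υ *ᵥ u)) j ≤ v j := by
      intro j
      have h9 := mulVec_mono hB0 hstep1 j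
      rwa [Matrix.mulVec_mulVec (M := B) (N := 1 - Γ), h2, Matrix.one_mulVec] at h9
    have hstep3 : ((Δ * B * Υ) *ᵥ u) i ≤ (Δ *ᵥ v) i := by
      have h9 : ((Δ * B * Υ) *ᵥ u) i = (Δ *ᵥ (B *ᵥ (Υ *ᵥ u))) i := by
        rw [Matrix.mulVec_mulVec, Matrix.mulVec_mulVec]
      rw [h9]
      exact mulVec_mono hΔ hstep2 i
    exact lt_of_le_of_lt hstep3 (hΔv i)
  · rintro ⟨hΓlt, hSlt⟩
    obtain ⟨B, hB0, hBdiag, h1, h2⟩ := inv_series hΓ hΓlt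
    have hBinv : (1 - Γ)⁻¹ = B := Matrix.inv_eq_right_inv h1
    rw [hBinv] at hSlt
    have hS : ∀ i j, 0 ≤ (Δ * B * Υ) i j :=
      mul_nonneg_entry (mul_nonneg_entry hΔ hB0) hΥ
    obtain ⟨u, hu, hSu⟩ := crit_of_specRad hS hSlt
    set w : Fin p → ℝ := Δ *ᵥ (B *ᵥ (fun _ => 1)) with hw
    have hw0 : ∀ i, 0 ≤ w i := by
      intro i
      refine mulVec_nonneg hΔ (fun j => ?_) i
      exact mulVec_nonneg hB0 (fun _ => zero_le_one) j
    obtain ⟨ε, hε, hεlt⟩ : ∃ ε : ℝ, 0 < ε ∧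
        ∀ i, ((Δ * B * Υ) *ᵥ u) i + ε * w i < u i := by
      rcases isEmpty_or_nonempty (Fin p) with hp | hp
      · exact ⟨1, one_pos, fun i => isEmptyElim i⟩
      obtain ⟨i₀, -, hi₀⟩ := Finset.exists_min_image Finset.univ
        (fun i => (u i - ((Δ * B * Υ) *ᵥ u) i) / (w i + 1)) Finset.univ_nonempty
      set ε := (u i₀ - ((Δ * B * Υ) *ᵥ u) i₀) / (w i₀ + 1) with hεdef
      have hε0 : 0 < ε := by
        refine div_pos ?_ (by linarith [hw0 i₀])
        linarith [hSu i₀]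
      refine ⟨ε, hε0, fun i => ?_⟩
      have h9 := hi₀ i (Finset.mem_univ i)
      have h10 : ε * (w i + 1) ≤ u i - ((Δ * B * Υ) *ᵥ u) i := by
        rw [← div_mul_cancel₀ (u i - ((Δ * B * Υ) *ᵥ u) i) (by linarith [hw0 i] : w i + 1 ≠ 0)]
        exact mul_le_mul_of_nonneg_right h9 (by linarith [hw0 i])
      nlinarith
    set v : Fin q → ℝ := B *ᵥ ((Υ *ᵥ u) + ε • (fun _ => (1:ℝ))) with hv
    have hvpos : ∀ j, 0 < v j := by
      intro j
      have h9 : v j = (B *ᵥ (Υ *ᵥ u)) j + ε * (B *ᵥ (fun _ => 1)) j := by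
        rw [hv, Matrix.mulVec_add, Matrix.mulVec_smul]
        simp
      have h10 : 0 ≤ (B *ᵥ (Υ *ᵥ u)) j :=
        mulVec_nonneg hB0 (fun i => mulVec_nonneg hΥ (fun i' => (hu i').le) i) j
      have h11 : 1 ≤ (B *ᵥ (fun _ => (1:ℝ))) j := by
        have hle : B j j ≤ (B *ᵥ fun _ => (1:ℝ)) j := by
          simp only [Matrix.mulVec, dotProduct, mul_one]
          exact Finset.single_le_sum (f := fun k => B j k) (fun k _ => hB0 j k)
            (Finset.mem_univ j)
        linarith [hBdiag j]
      rw [h9]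
      nlinarith
    have hresolve : (1 - Γ) *ᵥ v = (Υ *ᵥ u) + ε • (fun _ => (1:ℝ)) := by
      rw [hv, Matrix.mulVec_mulVec, h1, Matrix.one_mulVec]
    refine specRad_lt_one_of_crit hG (x := Sum.elim u v) ?_ ?_
    · rintro (i | j)
      · exact hu i
      · exact hvpos j
    · have hmv := Matrix.fromBlocks_mulVec (0 : Matrix (Fin p) (Fin p) ℝ) Δ Υ Γ
        (Sum.elim u v)
      have hcompl : Sum.elim u v ∘ Sum.inl = u := rfl
      have hcompr : Sum.elim u v ∘ Sum.inr = v := rfl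
      rintro (i | j)
      · rw [hGdef, hmv]
        simp only [hcompl, hcompr, Sum.elim_inl, Matrix.zero_mulVec, Pi.add_apply,
          Pi.zero_apply, zero_add]
        have h9 : (Δ *ᵥ v) i = ((Δ * B * Υ) *ᵥ u) i + ε * w i := by
          rw [hv, Matrix.mulVec_add, Matrix.mulVec_smul, Matrix.mulVec_add, Matrix.mulVec_smul]
          simp only [Pi.add_apply, Pi.smul_apply, smul_eq_mul]
          rw [Matrix.mulVec_mulVec, Matrix.mulVec_mulVec, hw]
        rw [h9]
        exact hεlt i
      · rw [hGdef, hmv]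
        simp only [hcompl, hcompr, Sum.elim_inr, Pi.add_apply]
        have h9 : (Γ *ᵥ v) j = v j - ((Υ *ᵥ u) j + ε) := by
          have h10 := congrFun hresolve j
          rw [Matrix.sub_mulVec, Matrix.one_mulVec] at h10
          simp only [Pi.sub_apply, Pi.add_apply, Pi.smul_apply, smul_eq_mul, mul_one] at h10
          linarith
        rw [h9]
        linarith [hε]
end
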